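/- arXiv:1609.03838 — 10 statements merged into one kernel-verified Lean document; each statement's English description precedes it below -/
import Mathlib

section
/- For tropical polynomials f, g in the tropical semiring of Laurent polynomials, the tropical variety of the product satisfies V(f ⊙ g) = V(f) ∪ V(g), where V(h) is the set of points at which the minimum defining h is attained at least twice (or equals ∞). -/
open scoped Classical

/-- The tropical semiring `ℝ ∪ {∞}` with `⊕ = min` and `⊙ = +`. -/
abbrev TropR : Type := Tropical (WithTop ℝ)

/-- The semiring of tropical Laurent polynomials in `n` variables: formal tropical sums
`⊕ a_u ⊙ x^u` with `u ∈ ℤⁿ`, with coefficientwise `min` as addition and min-plus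
convolution as multiplication. -/
abbrev TropLaurent (n : ℕ) : Type := AddMonoidAlgebra TropR (Fin n → ℤ)

/-- The value `a_u + w·u` of the term of `f` with exponent `u` at the point `w ∈ ℝⁿ`. -/
noncomputable def termVal {n : ℕ} (f : TropLaurent n) (w : Fin n → ℝ) (u : Fin n → ℤ) :
    WithTop ℝ :=
  (f.coeff u).untrop + ((∑ i, (u i : ℝ) * w i : ℝ) : WithTop ℝ)

/-- `f(w) = min_u (a_u + w·u)` (which is `∞` when `f` has no terms). -/
noncomputable def tropEval {n : ℕ} (f : TropLaurent n) (w : Fin n → ℝ) : WithTop ℝ :=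
  f.coeff.support.inf (termVal f w)

/-- The tropical variety of `f`: points where `f(w) = ∞` or the minimum defining `f(w)`
is attained by at least two distinct terms. -/
noncomputable def tropV {n : ℕ} (f : TropLaurent n) : Set (Fin n → ℝ) :=
  {w | tropEval f w = ⊤ ∨
    ∃ u v : Fin n → ℤ, u ≠ v ∧ termVal f w u = tropEval f w ∧ termVal f w v = tropEval f w}

/-! Evaluation turns tropical multiplication into addition, `(f ⊙ g)(w) = f(w) + g(w)`, and a term
of `f ⊙ g` attains this minimum exactly when it comes from a pair of minimizing terms of `f` and `g`.
Hence the set of minimizing exponents of `f ⊙ g` is the Minkowski sum of those of `f` and `g`, and a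
sum `A + B` of nonempty subsets of `ℤⁿ` has two elements iff `A` or `B` does. -/

open scoped Pointwise

theorem AddMonoidAlgebra.untrop_coeff_mul {R G : Type*} [LinearOrderedAddCommMonoidWithTop R]
    [AddMonoid G] [DecidableEq G] (x y : AddMonoidAlgebra (Tropical R) G) (g : G) :
    ((x * y).coeff g).untrop = {p ∈ x.coeff.support ×ˢ y.coeff.support | p.1 + p.2 = g}.inf
      fun p => (x.coeff p.1).untrop + (y.coeff p.2).untrop := by
  have : (x * y).coeff g =
      ∑ p ∈ x.coeff.support ×ˢ y.coeff.support with p.1 + p.2 = g, x.coeff p.1 * y.coeff p.2 := by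
    rw [Finset.sum_filter, Finset.sum_product]
    exact AddMonoidAlgebra.coeff_mul ..
  rw [this, Finset.untrop_sum']
  rfl

theorem Set.nontrivial_add_iff {α : Type*} [Add α] [IsCancelAdd α] {s t : Set α}
    (hs : s.Nonempty) (ht : t.Nonempty) :
    (s + t).Nontrivial ↔ s.Nontrivial ∨ t.Nontrivial := by
  refine ⟨fun h => ?_, ?_⟩
  · by_contra! hst
    exact h.not_subsingleton (Set.image2_add (s := s) (t := t) ▸ hst.1.image2 hst.2 (· + ·))
  · rintro (h | h)
    exacts [h.add_right ht, h.add_left hs]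

theorem WithTop.add_eq_add_iff_eq_and_eq {α : Type*} [AddCommMonoid α] [PartialOrder α]
    [IsOrderedCancelAddMonoid α] {a b c d : WithTop α} (hac : a ≤ c) (hbd : b ≤ d)
    (hcd : c + d ≠ ⊤) : a + b = c + d ↔ a = c ∧ b = d := by
  obtain ⟨hc, hd⟩ := WithTop.add_ne_top.1 hcd
  lift c to α using hc
  lift d to α using hd
  lift a to α using ne_top_of_le_ne_top WithTop.coe_ne_top hac
  lift b to α using ne_top_of_le_ne_top WithTop.coe_ne_top hbd
  norm_cast at *
  exact _root_.add_eq_add_iff_eq_and_eq hac hbd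

section

variable {n : ℕ} (f g : TropLaurent n) (w : Fin n → ℝ)

theorem termVal_eq_top_of_notMem {u : Fin n → ℤ} (h : u ∉ f.coeff.support) :
    termVal f w u = ⊤ := by
  rw [Finsupp.notMem_support_iff] at h
  simp [termVal, h]

theorem termVal_add_termVal (a b : Fin n → ℤ) :
    termVal f w a + termVal g w b =
      (f.coeff a).untrop + (g.coeff b).untrop + ((∑ i, ((a + b) i : ℝ) * w i : ℝ) : WithTop ℝ) := by
  simp only [termVal, Pi.add_apply, Int.cast_add, add_mul, Finset.sum_add_distrib,
    WithTop.coe_add]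
  abel

theorem termVal_mul_le (a b : Fin n → ℤ) :
    termVal (f * g) w (a + b) ≤ termVal f w a + termVal g w b := by
  by_cases ha : a ∈ f.coeff.support
  · by_cases hb : b ∈ g.coeff.support
    · rw [termVal_add_termVal, termVal, AddMonoidAlgebra.untrop_coeff_mul]
      gcongr
      exact Finset.inf_le (b := (a, b)) (Finset.mem_filter.2 ⟨Finset.mem_product.2 ⟨ha, hb⟩, rfl⟩)
    · simp [termVal_eq_top_of_notMem g w hb]
  · simp [termVal_eq_top_of_notMem f w ha]

theorem exists_termVal_mul_eq {u : Fin n → ℤ} (h : termVal (f * g) w u ≠ ⊤) :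
    ∃ a b, a + b = u ∧ termVal (f * g) w u = termVal f w a + termVal g w b := by
  rw [termVal, AddMonoidAlgebra.untrop_coeff_mul] at h ⊢
  have hs : {p ∈ f.coeff.support ×ˢ g.coeff.support | p.1 + p.2 = u}.Nonempty := by
    by_contra! hs
    simp [hs] at h
  obtain ⟨p, hp, hinf⟩ := Finset.exists_mem_eq_inf _ hs
    fun p : (Fin n → ℤ) × (Fin n → ℤ) => (f.coeff p.1).untrop + (g.coeff p.2).untrop
  have hpu : p.1 + p.2 = u := (Finset.mem_filter.1 hp).2
  refine ⟨p.1, p.2, hpu, ?_⟩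
  rw [hinf, termVal_add_termVal, hpu]

theorem tropEval_le_termVal (u : Fin n → ℤ) : tropEval f w ≤ termVal f w u := by
  by_cases h : u ∈ f.coeff.support
  · exact Finset.inf_le h
  · simp [termVal_eq_top_of_notMem f w h]

def minExponents : Set (Fin n → ℤ) := {u | termVal f w u = tropEval f w}

theorem minExponents_nonempty (h : tropEval f w ≠ ⊤) : (minExponents f w).Nonempty := by
  have hne : f.coeff.support.Nonempty := by
    rw [Finset.nonempty_iff_ne_empty]
    rintro hf
    simp [tropEval, hf] at h
  obtain ⟨u, -, hu⟩ := Finset.exists_mem_eq_inf _ hne (termVal f w)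
  exact ⟨u, hu.symm⟩

theorem mem_tropV_iff : w ∈ tropV f ↔ tropEval f w = ⊤ ∨ (minExponents f w).Nontrivial :=
  or_congr_right ⟨fun ⟨u, v, huv, hu, hv⟩ => ⟨u, hu, v, hv, huv⟩,
    fun ⟨u, hu, v, hv, huv⟩ => ⟨u, v, huv, hu, hv⟩⟩

theorem tropEval_mul : tropEval (f * g) w = tropEval f w + tropEval g w := by
  refine le_antisymm ?_ (Finset.le_inf fun u _ => ?_)
  · rcases eq_or_ne (tropEval f w + tropEval g w) ⊤ with h | h
    · simp [h]
    obtain ⟨a, ha⟩ := minExponents_nonempty f w (WithTop.add_ne_top.1 h).1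
    obtain ⟨b, hb⟩ := minExponents_nonempty g w (WithTop.add_ne_top.1 h).2
    calc tropEval (f * g) w ≤ termVal (f * g) w (a + b) := tropEval_le_termVal _ w _
      _ ≤ termVal f w a + termVal g w b := termVal_mul_le f g w a b
      _ = tropEval f w + tropEval g w := by rw [ha, hb]
  · rcases eq_or_ne (termVal (f * g) w u) ⊤ with h | h
    · simp [h]
    obtain ⟨a, b, -, hab⟩ := exists_termVal_mul_eq f g w h
    rw [hab]
    exact add_le_add (tropEval_le_termVal f w a) (tropEval_le_termVal g w b)

theorem minExponents_mul (hf : tropEval f w ≠ ⊤) (hg : tropEval g w ≠ ⊤) :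
    minExponents (f * g) w = minExponents f w + minExponents g w := by
  ext u
  simp only [minExponents, Set.mem_ofPred_eq, Set.mem_add, tropEval_mul]
  constructor
  · intro hu
    have hne : termVal (f * g) w u ≠ ⊤ := hu ▸ WithTop.add_ne_top.2 ⟨hf, hg⟩
    obtain ⟨a, b, rfl, hab⟩ := exists_termVal_mul_eq f g w hne
    rw [hab, eq_comm, WithTop.add_eq_add_iff_eq_and_eq (tropEval_le_termVal f w a)
      (tropEval_le_termVal g w b) (hab ▸ hne)] at hu
    exact ⟨a, hu.1.symm, b, hu.2.symm, rfl⟩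
  · rintro ⟨a, ha, b, hb, rfl⟩
    refine le_antisymm ?_ (tropEval_mul f g w ▸ tropEval_le_termVal _ w _)
    exact (termVal_mul_le f g w a b).trans_eq (by rw [ha, hb])

end

/-- For tropical (Laurent) polynomials `f, g`, the variety of the tropical product
satisfies `V(f ⊙ g) = V(f) ∪ V(g)`. -/
theorem tropV_mul {n : ℕ} (f g : TropLaurent n) :
    tropV (f * g) = tropV f ∪ tropV g := by
  ext w
  simp only [Set.mem_union, mem_tropV_iff, tropEval_mul, WithTop.add_eq_top]
  by_cases hf : tropEval f w = ⊤
  · simp [hf]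
  by_cases hg : tropEval g w = ⊤
  · simp [hg]
  rw [minExponents_mul f g w hf hg, Set.nontrivial_add_iff (minExponents_nonempty f w hf)
    (minExponents_nonempty g w hg)]
  simp [hf, hg]
end

section
/- Let M = (E, p) be a valuated matroid of rank r with basis valuation p : binom(E, r) → ℝ ∪ {∞}, and let w ∈ ℝ^E. Then the collection in_w B(M) of r-subsets B minimizing p(B) − ∑_{e ∈ B} w_e satisfies the basis exchange axiom; that is, in_w B(M) is the set of bases of a matroid on E. -/
/-!
Shifting a valuation by the linear function `B ↦ -∑_{e ∈ B} w_e` preserves the valuated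
exchange inequality, since the two exchanged sets carry the same total weight as the original
pair. If `A` and `B` both attain the finite minimum `m` of `p_w`, the exchange inequality
gives two sets whose values are each at least `m` and sum to at most `2m`, so both equal `m`.
-/

/-- A valuated matroid of rank `r` on a finite ground set `E`, with values in `ℝ ∪ {∞}`:
a basis valuation function `p` on `binom(E,r)` (encoded as a function on all finsets which
is `∞` away from `r`-sets), not identically `∞`, satisfying the valuated basis exchange
axiom. -/
structure ValuatedMatroid (E : Type*) [DecidableEq E] [Fintype E] (r : ℕ) where
  p : Finset E → WithTop ℝ
  card_of_ne_top : ∀ B : Finset E, p B ≠ ⊤ → B.card = r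
  exists_ne_top : ∃ B : Finset E, p B ≠ ⊤
  exchange : ∀ A B : Finset E, A.card = r → B.card = r → ∀ a ∈ A \ B,
    ∃ b ∈ B \ A,
      p (insert b (A.erase a)) + p (insert a (B.erase b)) ≤ p A + p B

namespace ValuatedMatroid

variable {E : Type*} [DecidableEq E] [Fintype E] {r : ℕ}

/-- The shifted valuation `p_w(B) = p(B) − ∑_{e ∈ B} w_e`. -/
noncomputable def pw (M : ValuatedMatroid E r) (w : E → ℝ) (B : Finset E) : WithTop ℝ :=
  M.p B + ((-(∑ e ∈ B, w e) : ℝ) : WithTop ℝ)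

/-- The minimum of `p_w` over all subsets of `E` (equivalently over all `r`-subsets,
since `p` is `∞` elsewhere). -/
noncomputable def minVal (M : ValuatedMatroid E r) (w : E → ℝ) : WithTop ℝ :=
  (Finset.univ : Finset E).powerset.inf (M.pw w)

/-- `B` is a basis of the initial matroid `in_w(M)`: an `r`-subset minimizing `p_w`. -/
def IsInitBasis (M : ValuatedMatroid E r) (w : E → ℝ) (B : Finset E) : Prop :=
  B.card = r ∧ M.pw w B = M.minVal w

end ValuatedMatroid

theorem WithTop.eq_of_le_of_le_of_add_le {α : Type*} [AddCommMonoid α] [LinearOrder α]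
    [IsOrderedCancelAddMonoid α] {m : α} {x y : WithTop α} (hx : (m : WithTop α) ≤ x)
    (hy : (m : WithTop α) ≤ y) (hxy : x + y ≤ m + m) : x = m := by
  rw [← WithTop.coe_add] at hxy
  have hxy_ne_top : x + y ≠ ⊤ := ne_top_of_le_ne_top WithTop.coe_ne_top hxy
  lift x to α using WithTop.add_ne_top.1 hxy_ne_top |>.1
  lift y to α using WithTop.add_ne_top.1 hxy_ne_top |>.2
  norm_cast at hx hy hxy ⊢
  refine le_antisymm ?_ hx
  by_contra! hmx
  exact (add_lt_add_of_lt_of_le hmx hy).not_ge hxy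

namespace Finset

variable {α β : Type*} [DecidableEq α] {s : Finset α} {a b : α}

theorem card_insert_erase_of_mem_of_notMem (ha : a ∈ s) (hb : b ∉ s) :
    (insert b (s.erase a)).card = s.card := by
  rw [card_insert_of_notMem fun h ↦ hb (mem_of_mem_erase h), card_erase_add_one ha]

theorem sum_insert_erase_of_mem_of_notMem [AddCommGroup β] (f : α → β) (ha : a ∈ s)
    (hb : b ∉ s) : ∑ x ∈ insert b (s.erase a), f x = ∑ x ∈ s, f x - f a + f b := by
  rw [sum_insert fun h ↦ hb (mem_of_mem_erase h), sum_erase_eq_sub ha, add_comm]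

end Finset

namespace ValuatedMatroid

variable {E : Type*} [DecidableEq E] [Fintype E] {r : ℕ} (M : ValuatedMatroid E r) (w : E → ℝ)

theorem pw_exchange {A B : Finset E} (hA : A.card = r) (hB : B.card = r) {a : E}
    (ha : a ∈ A \ B) : ∃ b ∈ B \ A,
      M.pw w (insert b (A.erase a)) + M.pw w (insert a (B.erase b)) ≤ M.pw w A + M.pw w B := by
  obtain ⟨b, hb, hexch⟩ := M.exchange A B hA hB a ha
  rw [Finset.mem_sdiff] at ha hb
  refine ⟨b, Finset.mem_sdiff.2 hb, ?_⟩
  have hweight : -∑ e ∈ insert b (A.erase a), w e + -∑ e ∈ insert a (B.erase b), w e =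
      -∑ e ∈ A, w e + -∑ e ∈ B, w e := by
    rw [Finset.sum_insert_erase_of_mem_of_notMem w ha.1 hb.2,
      Finset.sum_insert_erase_of_mem_of_notMem w hb.1 ha.2]
    ring
  simp only [pw]
  rw [add_add_add_comm, add_add_add_comm (M.p A), ← WithTop.coe_add, ← WithTop.coe_add, hweight]
  gcongr

theorem minVal_le_pw (B : Finset E) : M.minVal w ≤ M.pw w B :=
  Finset.inf_le (Finset.mem_powerset.2 (Finset.subset_univ B))

theorem minVal_ne_top : M.minVal w ≠ ⊤ := by
  obtain ⟨B, hB⟩ := M.exists_ne_top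
  refine ne_top_of_le_ne_top ?_ (M.minVal_le_pw w B)
  simpa [pw, WithTop.add_eq_top] using hB

theorem exists_isInitBasis : ∃ B : Finset E, M.IsInitBasis w B := by
  obtain ⟨B, -, hB⟩ := Finset.exists_mem_eq_inf (Finset.univ : Finset E).powerset
    ⟨∅, Finset.empty_mem_powerset _⟩ (M.pw w)
  have hpB : M.p B ≠ ⊤ := by
    intro h
    apply M.minVal_ne_top w
    rw [minVal, hB, pw, h, top_add]
  exact ⟨B, M.card_of_ne_top B hpB, hB.symm⟩

theorem IsInitBasis.exchange {A B : Finset E} (hA : M.IsInitBasis w A)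
    (hB : M.IsInitBasis w B) {a : E} (ha : a ∈ A \ B) :
    ∃ b ∈ B \ A, M.IsInitBasis w (insert b (A.erase a)) := by
  obtain ⟨b, hb, hexch⟩ := M.pw_exchange w hA.1 hB.1 ha
  have haA := (Finset.mem_sdiff.1 ha).1
  have hbA := (Finset.mem_sdiff.1 hb).2
  refine ⟨b, hb, by rw [Finset.card_insert_erase_of_mem_of_notMem haA hbA, hA.1], ?_⟩
  obtain ⟨m, hm⟩ := WithTop.ne_top_iff_exists.1 (M.minVal_ne_top w)
  rw [hA.2, hB.2, ← hm] at hexch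
  rw [← hm]
  exact WithTop.eq_of_le_of_le_of_add_le (hm ▸ M.minVal_le_pw w _)
    (hm ▸ M.minVal_le_pw w _) hexch

end ValuatedMatroid

open ValuatedMatroid

/-- **Initial collections of valuated matroids are matroids.**  For a valuated matroid
`M = (E, p)` of rank `r` and `w ∈ ℝ^E`, the collection of `r`-subsets `B` minimizing
`p(B) − ∑_{e ∈ B} w_e` is nonempty and satisfies the basis exchange axiom; that is, it
is the set of bases of a matroid of rank `r` on `E`. -/
theorem initBases_nonempty_and_exchange {E : Type*} [DecidableEq E] [Fintype E] {r : ℕ}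
    (M : ValuatedMatroid E r) (w : E → ℝ) :
    (∃ B : Finset E, M.IsInitBasis w B) ∧
    ∀ A B : Finset E, M.IsInitBasis w A → M.IsInitBasis w B → ∀ a ∈ A \ B,
      ∃ b ∈ B \ A, M.IsInitBasis w (insert b (A.erase a)) :=
  ⟨M.exists_isInitBasis w, fun _ _ hA hB _ ha ↦ IsInitBasis.exchange M w hA hB ha⟩
end

section
/- If two homogeneous tropical ideals I ⊆ J in the semiring of tropical polynomials have the same Hilbert function (i.e., for each degree d the valuated matroids M_d(I) and M_d(J) have equal rank), then I = J. -/
open MvPolynomial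

/-- `I` is a homogeneous tropical ideal of `R[x₀,…,xₙ]`, where `R = Tropical R₀` is a
valuative semifield (the multiplicative group `R₀ \ {∞}` is totally ordered and tropical
addition is `min`): `I` is a homogeneous ideal each of whose graded pieces `I_d` is the
set of vectors of a valuated matroid on the degree-`d` monomials, i.e. satisfies the
vector (monomial) elimination axiom. -/
def IsHomogTropicalIdeal {n : ℕ} {R₀ : Type*} [LinearOrderedAddCommGroupWithTop R₀]
    (I : Ideal (MvPolynomial (Fin (n + 1)) (Tropical R₀))) : Prop :=
  (∀ f ∈ I, ∀ d : ℕ, homogeneousComponent d f ∈ I) ∧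
  ∀ d : ℕ, ∀ f ∈ I, ∀ g ∈ I, f.IsHomogeneous d → g.IsHomogeneous d →
    ∀ u : Fin (n + 1) →₀ ℕ, coeff u f = coeff u g → coeff u f ≠ 0 →
      ∃ h ∈ I, h.IsHomogeneous d ∧ coeff u h = 0 ∧
        (∀ v, coeff v f + coeff v g ≤ coeff v h) ∧
        (∀ v, coeff v f ≠ coeff v g → coeff v h = coeff v f + coeff v g)

/-- The Hilbert function of a homogeneous tropical ideal: `H_I(d)` is the rank of the
valuated matroid `M_d(I)` on the degree-`d` monomials whose vectors are `I_d`, i.e. the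
maximal size of a set `S` of degree-`d` monomials supporting no nonzero element of
`I_d`. -/
noncomputable def tropicalHilbert {n : ℕ} {R₀ : Type*} [LinearOrderedAddCommGroupWithTop R₀]
    (I : Ideal (MvPolynomial (Fin (n + 1)) (Tropical R₀))) (d : ℕ) : ℕ :=
  sSup {k : ℕ | ∃ S : Finset ((Fin (n + 1)) →₀ ℕ), S.card = k ∧
    (∀ u ∈ S, (∑ i ∈ u.support, u i) = d) ∧
    ∀ f ∈ I, f.IsHomogeneous d → f ≠ 0 → ¬ f.support ⊆ S}

/-!
Work in one degree `d` at a time. Since `I_d ⊆ J_d`, every `I`-dependent set of degree-`d`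
monomials is `J`-dependent; equal ranks and the elimination axiom give the converse. Indeed,
if some `I`-independent `S` supported a nonzero `g ∈ J_d`, extend `S` to an `I`-basis `B`: a
`J`-basis `B₁` of `B` is then a proper subset, and a `J`-basis of all degree-`d` monomials
through `B₁` has `|B|` elements, so it contains some `e ∉ B`. The fundamental `I`-circuit of `e`
over `B` lies in `J_d`, and eliminating its monomials in `B \ B₁` against `J`-circuits over
`B₁` leaves an element of `J_d` supported on the `J`-independent set `B₁ ∪ {e}`.

So every nonzero `g ∈ J_d` has some `f ∈ I_d` with `supp f ⊆ supp g`. Rescale `f` so that it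
dominates `g` and agrees with it at a monomial `u`; eliminating `u` between them writes
`g = f + h` with `h ∈ J_d` of smaller support, and induction on the support gives `g ∈ I`.
-/

open Finset

namespace Tropical

variable {R : Type*} [LinearOrderedAddCommGroupWithTop R] {a b c : Tropical R}

lemma untrop_ne_top_of_ne_zero (ha : a ≠ 0) : untrop a ≠ ⊤ :=
  fun h => ha (untrop_injective (h.trans untrop_zero.symm))

instance : NoZeroDivisors (Tropical R) :=
  ⟨fun {a b} h => by simpa [← untrop_inj_iff] using h⟩

lemma mul_inv_mul_cancel_of_ne_zero (hb : b ≠ 0) (a : Tropical R) : a * b⁻¹ * b = a :=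
  untrop_injective <| by
    simp only [untrop_mul, untrop_inv,
      LinearOrderedAddCommGroupWithTop.neg_add_cancel_right_of_ne_top (untrop_ne_top_of_ne_zero hb)]

lemma le_mul_of_mul_inv_le (hb : b ≠ 0) (h : a * b⁻¹ ≤ c) : a ≤ c * b :=
  mul_inv_mul_cancel_of_ne_zero hb a ▸ mul_le_mul_left h b

-- Coefficientwise, `g = f + h` when `h` comes from eliminating between `f ≥ g` and `g`.
lemma eq_add_of_le_of_elim (hab : a ≤ b) (hc : b + a ≤ c) (hc' : b ≠ a → c = b + a) :
    a = b + c := by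
  by_cases hba : b = a
  · subst hba
    rw [add_self] at hc
    exact (add_eq_left hc).symm
  · rw [hc' hba, add_eq_right hab, add_eq_right hab]

end Tropical

namespace MvPolynomial

variable {σ R : Type*} [LinearOrderedAddCommGroupWithTop R] {f g h : MvPolynomial σ (Tropical R)}

lemma support_C_mul_of_ne_zero {c : Tropical R} (hc : c ≠ 0) (f : MvPolynomial σ (Tropical R)) :
    (C c * f).support = f.support := by
  ext u
  simp [coeff_C_mul, hc]

-- In `Tropical R` the zero is the top element, so larger coefficients mean smaller supports.
lemma support_subset_of_forall_coeff_le (hgh : ∀ v, coeff v g ≤ coeff v h) :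
    h.support ⊆ g.support := fun v hv =>
  mem_support_iff.mpr fun hg =>
    mem_support_iff.mp hv (le_antisymm (Tropical.le_zero _) (hg ▸ hgh v))

lemma exists_C_mul_ge_and_eq (hf : f ≠ 0) (g : MvPolynomial σ (Tropical R)) :
    ∃ c, ∃ u ∈ f.support,
      coeff u (C c * f) = coeff u g ∧ ∀ v, coeff v g ≤ coeff v (C c * f) := by
  obtain ⟨u, hu, hmax⟩ := f.support.exists_max_image (fun u => coeff u g * (coeff u f)⁻¹)
    (support_nonempty.mpr hf)
  refine ⟨coeff u g * (coeff u f)⁻¹, u, hu, ?_, fun v => ?_⟩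
  · rw [coeff_C_mul, Tropical.mul_inv_mul_cancel_of_ne_zero (mem_support_iff.mp hu)]
  · rw [coeff_C_mul]
    by_cases hv : v ∈ f.support
    · exact Tropical.le_mul_of_mul_inv_le (mem_support_iff.mp hv) (hmax v hv)
    · rw [notMem_support_iff.mp hv, mul_zero]
      exact Tropical.le_zero _

end MvPolynomial

section TropicalMatroid

variable {n : ℕ} {R₀ : Type*} [LinearOrderedAddCommGroupWithTop R₀]

open Ideal

/-- Independence of `S` in the valuated matroid `M_d(K)`. -/
def Ideal.IndepIn (K : Ideal (MvPolynomial (Fin (n + 1)) (Tropical R₀))) (d : ℕ)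
    (S : Finset (Fin (n + 1) →₀ ℕ)) : Prop :=
  (∀ u ∈ S, (∑ i ∈ u.support, u i) = d) ∧
  ∀ f ∈ K, f.IsHomogeneous d → f ≠ 0 → ¬ f.support ⊆ S

structure Ideal.IsBasisIn (K : Ideal (MvPolynomial (Fin (n + 1)) (Tropical R₀))) (d : ℕ)
    (X B : Finset (Fin (n + 1) →₀ ℕ)) : Prop where
  indepIn : K.IndepIn d B
  subset : B ⊆ X
  not_indepIn_insert : ∀ e ∈ X, e ∉ B → ¬ K.IndepIn d (insert e B)

variable {K I J : Ideal (MvPolynomial (Fin (n + 1)) (Tropical R₀))} {d : ℕ}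
  {S T X B M N : Finset (Fin (n + 1) →₀ ℕ)} {f g : MvPolynomial (Fin (n + 1)) (Tropical R₀)}
  {e x : Fin (n + 1) →₀ ℕ}

lemma Ideal.indepIn_empty (K : Ideal (MvPolynomial (Fin (n + 1)) (Tropical R₀))) (d : ℕ) :
    K.IndepIn d ∅ :=
  ⟨by simp, fun _ _ _ hf0 hf => hf0 (support_eq_empty.mp (subset_empty.mp hf))⟩

lemma Ideal.IndepIn.mono (hS : K.IndepIn d S) (hTS : T ⊆ S) : K.IndepIn d T :=
  ⟨fun u hu => hS.1 u (hTS hu), fun f hf hfd hf0 hfT => hS.2 f hf hfd hf0 (hfT.trans hTS)⟩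

lemma Ideal.IndepIn.subset_finsuppAntidiag (hS : K.IndepIn d S) :
    S ⊆ finsuppAntidiag univ d :=
  fun u hu => by simpa [← Finsupp.degree_apply, Finsupp.degree_eq_sum] using hS.1 u hu

lemma Ideal.IndepIn.mem_support_of_support_subset_insert (hS : K.IndepIn d S) (hf : f ∈ K)
    (hfd : f.IsHomogeneous d) (hf0 : f ≠ 0) (hfS : f.support ⊆ insert e S) :
    e ∈ f.support := by
  by_contra he
  exact hS.2 f hf hfd hf0 fun v hv =>
    (mem_insert.mp (hfS hv)).resolve_left (by rintro rfl; exact he hv)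

lemma Ideal.IndepIn.exists_circuit (hS : K.IndepIn d S) (hSe : ¬ K.IndepIn d (insert e S))
    (he : (∑ i ∈ e.support, e i) = d) :
    ∃ f ∈ K, f.IsHomogeneous d ∧ e ∈ f.support ∧ f.support ⊆ insert e S := by
  obtain ⟨f, hf, hfd, hf0, hfS⟩ :
      ∃ f ∈ K, f.IsHomogeneous d ∧ f ≠ 0 ∧ f.support ⊆ insert e S := by
    by_contra! h
    exact hSe ⟨forall_mem_insert _ _ _ |>.mpr ⟨he, hS.1⟩, h⟩
  exact ⟨f, hf, hfd, hS.mem_support_of_support_subset_insert hf hfd hf0 hfS, hfS⟩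

lemma Ideal.exists_isBasisIn_superset (hS : K.IndepIn d S) (hSX : S ⊆ X) :
    ∃ B, S ⊆ B ∧ K.IsBasisIn d X B := by
  classical
  obtain ⟨B, hB, hmax⟩ :=
    exists_max_image (X.powerset.filter fun T => K.IndepIn d T ∧ S ⊆ T) card
      ⟨S, by simp [hSX, hS]⟩
  simp only [mem_filter, mem_powerset] at hB hmax
  refine ⟨B, hB.2.2, hB.2.1, hB.1, fun e he heB heB' => ?_⟩
  have := hmax (insert e B) ⟨insert_subset he hB.1, heB', hB.2.2.trans (subset_insert _ _)⟩
  rw [card_insert_of_notMem heB] at this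
  omega

lemma IsHomogTropicalIdeal.exists_eliminate (hK : IsHomogTropicalIdeal K) (hf : f ∈ K)
    (hg : g ∈ K) (hfd : f.IsHomogeneous d) (hgd : g.IsHomogeneous d) (hxf : x ∈ f.support)
    (hxg : x ∈ g.support) :
    ∃ h ∈ K, h.IsHomogeneous d ∧ h.support ⊆ (f.support ∪ g.support).erase x ∧
      f.support \ g.support ⊆ h.support := by
  have hfx := mem_support_iff.mp hxf
  set c := coeff x f * (coeff x g)⁻¹
  have hcx : coeff x (C c * g) = coeff x f := by
    rw [coeff_C_mul, Tropical.mul_inv_mul_cancel_of_ne_zero (mem_support_iff.mp hxg)]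
  have hcg : (C c * g).support = g.support :=
    support_C_mul_of_ne_zero (left_ne_zero_of_mul (by rw [← coeff_C_mul, hcx]; exact hfx)) g
  obtain ⟨h, hh, hhd, hhx, hfgh, hne⟩ :=
    hK.2 d f hf _ (K.mul_mem_left _ hg) hfd (hgd.C_mul c) x hcx.symm hfx
  refine ⟨h, hh, hhd, fun v hv => ?_, fun v hv => ?_⟩
  · rw [mem_support_iff] at hv
    refine mem_erase.mpr ⟨by rintro rfl; exact hv hhx, ?_⟩
    rw [mem_union, ← hcg, mem_support_iff, mem_support_iff]
    by_contra! h0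
    exact hv (le_antisymm (Tropical.le_zero _) (by simpa [h0.1, h0.2] using hfgh v))
  · obtain ⟨hvf, hvg⟩ := mem_sdiff.mp hv
    rw [← hcg, notMem_support_iff] at hvg
    rw [mem_support_iff] at hvf ⊢
    rwa [hne v (by rwa [hvg]), hvg, add_zero]

lemma IsHomogTropicalIdeal.indepIn_insert_erase (hK : IsHomogTropicalIdeal K)
    (hS : K.IndepIn d S) (hf : f ∈ K) (hfd : f.IsHomogeneous d) (hfS : f.support ⊆ insert e S)
    (hef : e ∈ f.support) (hxf : x ∈ f.support) (hxe : x ≠ e) :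
    K.IndepIn d (insert e (S.erase x)) := by
  refine ⟨forall_mem_insert _ _ _ |>.mpr ⟨(hfd.degree_eq_sum_deg_support hef).symm,
    fun u hu => hS.1 u (mem_of_mem_erase hu)⟩, fun g hg hgd hg0 hgS => ?_⟩
  have heg := (hS.mono (erase_subset x S)).mem_support_of_support_subset_insert hg hgd hg0 hgS
  have hxg : x ∉ g.support := fun hxg => by simpa [hxe] using hgS hxg
  obtain ⟨h, hh, hhd, hhfg, hfgh⟩ := hK.exists_eliminate hf hg hfd hgd hef heg
  have hxh : x ∈ h.support := hfgh (mem_sdiff.mpr ⟨hxf, hxg⟩)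
  refine hS.2 h hh hhd (support_nonempty.mp ⟨x, hxh⟩) fun v hv => ?_
  obtain ⟨hve, hv⟩ := mem_erase.mp (hhfg hv)
  rcases mem_union.mp hv with hv | hv
  · exact (mem_insert.mp (hfS hv)).resolve_left hve
  · exact mem_of_mem_erase ((mem_insert.mp (hgS hv)).resolve_left hve)

lemma IsHomogTropicalIdeal.card_le_of_isBasisIn (hK : IsHomogTropicalIdeal K)
    (hM : K.IsBasisIn d X M) (hN : K.IsBasisIn d X N) : N.card ≤ M.card := by
  induction hk : (M \ N).card using Nat.strong_induction_on generalizing N with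
  | _ k ih =>
  by_cases hMN : M ⊆ N
  · refine card_le_card fun e heN => ?_
    by_contra heM
    exact hM.not_indepIn_insert e (hN.subset heN) heM (hN.indepIn.mono (insert_subset heN hMN))
  obtain ⟨e, heM, heN⟩ := not_subset.mp hMN
  obtain ⟨f, hf, hfd, hef, hfN⟩ := hN.indepIn.exists_circuit
    (hN.not_indepIn_insert e (hM.subset heM) heN) (hM.indepIn.1 e heM)
  obtain ⟨x, hxf, hxM⟩ :=
    not_subset.mp (hM.indepIn.2 f hf hfd (support_nonempty.mp ⟨e, hef⟩))
  have hxe : x ≠ e := by rintro rfl; exact hxM heM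
  have hxN : x ∈ N := (mem_insert.mp (hfN hxf)).resolve_left hxe
  obtain ⟨N', hN'sub, hN'⟩ := exists_isBasisIn_superset
    (hK.indepIn_insert_erase hN.indepIn hf hfd hfN hef hxf hxe)
    (insert_subset (hM.subset heM) ((erase_subset x N).trans hN.subset))
  have hsub : M \ N' ⊆ M \ N := fun v hv => by
    obtain ⟨hvM, hvN'⟩ := mem_sdiff.mp hv
    refine mem_sdiff.mpr ⟨hvM, fun hvN =>
      hvN' (hN'sub (mem_insert_of_mem (mem_erase.mpr ⟨?_, hvN⟩)))⟩
    rintro rfl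
    exact hxM hvM
  have hlt : (M \ N').card < k := hk ▸ card_lt_card ((ssubset_iff_of_subset hsub).mpr
    ⟨e, mem_sdiff.mpr ⟨heM, heN⟩,
      fun he => (mem_sdiff.mp he).2 (hN'sub (mem_insert_self e _))⟩)
  calc N.card = (insert e (N.erase x)).card := by
        rw [card_insert_of_notMem (fun h => heN (mem_of_mem_erase h)), card_erase_add_one hxN]
    _ ≤ N'.card := card_le_card hN'sub
    _ ≤ M.card := ih _ hlt hN' rfl

lemma IsHomogTropicalIdeal.card_eq_tropicalHilbert (hK : IsHomogTropicalIdeal K)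
    (hB : K.IsBasisIn d (finsuppAntidiag univ d) B) : B.card = tropicalHilbert K d := by
  set ranks := {k | ∃ S : Finset (Fin (n + 1) →₀ ℕ), S.card = k ∧ K.IndepIn d S}
  have hbdd : BddAbove ranks := ⟨(finsuppAntidiag univ d).card, by
    rintro _ ⟨S, rfl, hS⟩
    exact card_le_card hS.subset_finsuppAntidiag⟩
  obtain ⟨S, hS, hSind⟩ := Nat.sSup_mem (s := ranks) ⟨0, ∅, rfl, indepIn_empty K d⟩ hbdd
  obtain ⟨B', hSB', hB'⟩ := exists_isBasisIn_superset hSind hSind.subset_finsuppAntidiag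
  refine le_antisymm (le_csSup hbdd ⟨B, rfl, hB.indepIn⟩) ?_
  calc tropicalHilbert K d = S.card := hS.symm
    _ ≤ B'.card := card_le_card hSB'
    _ ≤ B.card := hK.card_le_of_isBasisIn hB hB'

/-- If `e` is independent of a basis `B` of `X`, it is independent of `X`. -/
lemma IsHomogTropicalIdeal.notMem_support_of_isBasisIn (hK : IsHomogTropicalIdeal K)
    (hB : K.IsBasisIn d X B) (heX : e ∉ X) (he : K.IndepIn d (insert e B)) (hf : f ∈ K)
    (hfd : f.IsHomogeneous d) (hfX : f.support ⊆ insert e X) : e ∉ f.support := by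
  induction hk : (f.support \ insert e B).card using Nat.strong_induction_on generalizing f with
  | _ k ih =>
  intro hef
  by_cases hfB : f.support ⊆ insert e B
  · exact he.2 f hf hfd (support_nonempty.mp ⟨e, hef⟩) hfB
  obtain ⟨x, hxf, hxB⟩ := not_subset.mp hfB
  have hxe : x ≠ e := by rintro rfl; exact hxB (mem_insert_self _ _)
  obtain ⟨g, hg, hgd, hxg, hgB⟩ := hB.indepIn.exists_circuit
    (hB.not_indepIn_insert x ((mem_insert.mp (hfX hxf)).resolve_left hxe)
      fun h => hxB (mem_insert_of_mem h))
    (hfd.degree_eq_sum_deg_support hxf).symm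
  have heg : e ∉ g.support := fun h =>
    (mem_insert.mp (hgB h)).elim (fun h => hxe h.symm) fun h => heX (hB.subset h)
  -- eliminating `x` between `f` and `g` keeps `e` and trades `x` for monomials of `B`
  obtain ⟨h, hh, hhd, hhfg, hfgh⟩ := hK.exists_eliminate hf hg hfd hgd hxf hxg
  have hhf : h.support ⊆ (f.support ∪ B).erase x := fun v hv => by
    obtain ⟨hvx, hv⟩ := mem_erase.mp (hhfg hv)
    refine mem_erase.mpr ⟨hvx, ?_⟩
    rcases mem_union.mp hv with hv | hv
    · exact mem_union_left _ hv
    · exact mem_union_right _ ((mem_insert.mp (hgB hv)).resolve_left hvx)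
  have hhX : h.support ⊆ insert e X := fun v hv => by
    rcases mem_union.mp (mem_of_mem_erase (hhf hv)) with hv | hv
    · exact hfX hv
    · exact mem_insert_of_mem (hB.subset hv)
  have hlt : (h.support \ insert e B).card < k := by
    refine hk ▸ (card_le_card fun v hv => ?_).trans_lt
      (card_lt_card (erase_ssubset (mem_sdiff.mpr ⟨hxf, hxB⟩)))
    obtain ⟨hvh, hvB⟩ := mem_sdiff.mp hv
    obtain ⟨hvx, hv⟩ := mem_erase.mp (hhf hvh)
    exact mem_erase.mpr ⟨hvx, mem_sdiff.mpr
      ⟨(mem_union.mp hv).resolve_right fun h => hvB (mem_insert_of_mem h), hvB⟩⟩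
  exact ih _ hlt hh hhd hhX rfl (hfgh (mem_sdiff.mpr ⟨hef, heg⟩))

lemma IsHomogTropicalIdeal.indepIn_of_le_of_tropicalHilbert_eq (hI : IsHomogTropicalIdeal I)
    (hJ : IsHomogTropicalIdeal J) (hle : I ≤ J) (hH : tropicalHilbert I d = tropicalHilbert J d)
    (hS : I.IndepIn d S) : J.IndepIn d S := by
  refine ⟨hS.1, fun g hg hgd hg0 hgS => ?_⟩
  obtain ⟨B, hSB, hB⟩ := exists_isBasisIn_superset hS hS.subset_finsuppAntidiag
  obtain ⟨B₁, -, hB₁⟩ := exists_isBasisIn_superset (indepIn_empty J d) (empty_subset B)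
  obtain ⟨B₂, hB₁B₂, hB₂⟩ :=
    exists_isBasisIn_superset hB₁.indepIn (hB₁.subset.trans hB.subset)
  have hB₁B : B₁.card < B.card := card_lt_card <| ssubset_of_subset_of_ne hB₁.subset <| by
    rintro rfl
    exact hB₁.indepIn.2 g hg hgd hg0 (hgS.trans hSB)
  obtain ⟨e, heB₂, heB⟩ : ∃ e ∈ B₂, e ∉ B := by
    by_contra! hB₂B
    have hB₂' : J.IsBasisIn d B B₂ :=
      ⟨hB₂.indepIn, hB₂B, fun e he => hB₂.not_indepIn_insert e (hB.subset he)⟩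
    have := hJ.card_le_of_isBasisIn hB₁ hB₂'
    have := hI.card_eq_tropicalHilbert hB
    have := hJ.card_eq_tropicalHilbert hB₂
    omega
  obtain ⟨f, hf, hfd, hef, hfB⟩ := hB.indepIn.exists_circuit
    (hB.not_indepIn_insert e (hB₂.subset heB₂) heB) (hB₂.indepIn.1 e heB₂)
  exact hJ.notMem_support_of_isBasisIn hB₁ heB
    (hB₂.indepIn.mono (insert_subset heB₂ hB₁B₂)) (hle hf) hfd hfB hef

lemma IsHomogTropicalIdeal.mem_of_le_of_tropicalHilbert_eq (hI : IsHomogTropicalIdeal I)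
    (hJ : IsHomogTropicalIdeal J) (hle : I ≤ J) (hH : tropicalHilbert I d = tropicalHilbert J d)
    (hg : g ∈ J) (hgd : g.IsHomogeneous d) : g ∈ I := by
  induction hk : g.support.card using Nat.strong_induction_on generalizing g with
  | _ k ih =>
  by_cases hg0 : g = 0
  · exact hg0 ▸ I.zero_mem
  obtain ⟨f, hf, hfd, hf0, hfg⟩ :
      ∃ f ∈ I, f.IsHomogeneous d ∧ f ≠ 0 ∧ f.support ⊆ g.support := by
    by_contra! h
    exact (hI.indepIn_of_le_of_tropicalHilbert_eq hJ hle hH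
      ⟨fun u hu => (hgd.degree_eq_sum_deg_support hu).symm, h⟩).2 g hg hgd hg0 subset_rfl
  obtain ⟨c, u, hu, hcu, hgc⟩ := exists_C_mul_ge_and_eq hf0 g
  have hcf : C c * f ∈ I := I.mul_mem_left _ hf
  obtain ⟨h, hh, hhd, hhu, hcfgh, hne⟩ := hJ.2 d _ (hle hcf) g hg (hfd.C_mul c) hgd u hcu
    (hcu ▸ mem_support_iff.mp (hfg hu))
  have hgh : ∀ v, coeff v g ≤ coeff v h := fun v => Tropical.add_eq_right (hgc v) ▸ hcfgh v
  have hlt : h.support.card < k := hk ▸ card_lt_card ((ssubset_iff_of_subset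
    (support_subset_of_forall_coeff_le hgh)).mpr ⟨u, hfg hu, notMem_support_iff.mpr hhu⟩)
  have hgcfh : g = C c * f + h := MvPolynomial.ext _ _ fun v => by
    rw [coeff_add]
    exact Tropical.eq_add_of_le_of_elim (hgc v) (hcfgh v) (hne v)
  exact hgcfh ▸ I.add_mem hcf (ih _ hlt hh hhd rfl)

end TropicalMatroid

/-- If two homogeneous tropical ideals `I ⊆ J` of `R[x₀,…,xₙ]` have the same Hilbert
function, then `I = J`. -/
theorem eq_of_le_of_hilbert_eq {n : ℕ} {R₀ : Type*} [LinearOrderedAddCommGroupWithTop R₀]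
    (I J : Ideal (MvPolynomial (Fin (n + 1)) (Tropical R₀)))
    (hI : IsHomogTropicalIdeal I) (hJ : IsHomogTropicalIdeal J) (hle : I ≤ J)
    (hHilb : ∀ d : ℕ, tropicalHilbert I d = tropicalHilbert J d) :
    I = J := by
  refine le_antisymm hle fun g hg => ?_
  rw [← sum_homogeneousComponent g]
  exact I.sum_mem fun d _ => hI.mem_of_le_of_tropicalHilbert_eq hJ hle (hHilb d) (hJ.1 g hg d)
    (homogeneousComponent_isHomogeneous d g)
end

section
/- There is no infinite strictly ascending chain I₁ ⊊ I₂ ⊊ I₃ ⊊ ⋯ of homogeneous tropical ideals in R[x₀,…,xₙ]. -/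
open MvPolynomial

/-!
Fix a monomial order. If `I ≤ J` are homogeneous tropical ideals with the same leading monomials,
then `J ≤ I`, by induction on the leading monomial and the support size of a homogeneous `w ∈ J`.
If a nonzero element of `J` has support strictly inside that of `w`, it lies in `I`, and a rescaling
of it touches `w` from above; eliminating the touching monomial writes `w` as its sum with an
element of smaller support. Otherwise `w` has minimal support. An element of `I` with the same
leading monomial can then be reduced, eliminating alternately the leading monomial (in `J`) and a
monomial outside the support of `w` (in `I`), to a nonzero element of `I` supported inside that
of `w`, which by minimality is a multiple of `w`.
Hence along a strictly ascending chain the upward closed sets of leading monomials strictly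
increase, which Dickson's lemma forbids.
-/

open Finset

namespace Tropical

variable {R : Type*}

lemma add_eq_zero_iff_of_orderTop [LinearOrder R] [OrderTop R] {a b : Tropical R} :
    a + b = 0 ↔ a = 0 ∧ b = 0 := by
  rw [← congrFun₂ min_eq_add a b]
  exact min_eq_top

lemma eq_add_of_le_of_add_le [LinearOrder R] [OrderTop R] {a b c : Tropical R} (hab : a ≤ b)
    (hc : a + b ≤ c) (hne : a ≠ b → c = a + b) : a = b + c := by
  by_cases h : a = b
  · subst h
    rw [add_self] at hc
    exact (add_eq_left hc).symm
  · rw [hne h, add_eq_left hab, add_eq_right hab]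

lemma div_mul_cancel_of_ne_zero [LinearOrderedAddCommGroupWithTop R] {x : Tropical R}
    (hx : x ≠ 0) (y : Tropical R) : y / x * x = y := by
  have hx' : untrop x ≠ ⊤ := fun h => hx (untrop_injective h)
  apply untrop_injective
  rw [untrop_mul, untrop_div, sub_eq_add_neg,
    LinearOrderedAddCommGroupWithTop.neg_add_cancel_right_of_ne_top hx']

end Tropical

namespace MvPolynomial

variable {σ : Type*}

lemma IsHomogeneous.of_support_subset {R : Type*} [CommSemiring R] {φ ψ : MvPolynomial σ R}
    {d : ℕ} (hψ : ψ.IsHomogeneous d) (h : φ.support ⊆ ψ.support) : φ.IsHomogeneous d :=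
  fun _ hx => hψ (mem_support_iff.1 (h (mem_support_iff.2 hx)))

lemma support_C_mul_subset {R : Type*} [CommSemiring R] (t : R) (φ : MvPolynomial σ R) :
    (C t * φ).support ⊆ φ.support := by
  rw [← smul_eq_C_mul]
  exact support_smul

variable {R : Type*} [LinearOrderedAddCommGroupWithTop R]

lemma support_subset_union_of_forall_add_le [DecidableEq σ] {f g h : MvPolynomial σ (Tropical R)}
    (hle : ∀ x, coeff x f + coeff x g ≤ coeff x h) : h.support ⊆ f.support ∪ g.support := by
  intro x hx
  by_contra hfg
  simp only [Finset.mem_union, mem_support_iff, not_or, not_not] at hfg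
  have := hle x
  rw [hfg.1, hfg.2, add_zero] at this
  exact mem_support_iff.1 hx (le_antisymm (Tropical.le_zero _) this)

lemma coeff_C_div_mul {p : MvPolynomial σ (Tropical R)} {x : σ →₀ ℕ} (hx : coeff x p ≠ 0)
    (a : Tropical R) : coeff x (C (a / coeff x p) * p) = a := by
  rw [coeff_C_mul, Tropical.div_mul_cancel_of_ne_zero hx]

lemma exists_C_mul_ge_of_ne_zero (w : MvPolynomial σ (Tropical R))
    {w' : MvPolynomial σ (Tropical R)} (hw' : w' ≠ 0) :
    ∃ t, (∀ x, coeff x w ≤ coeff x (C t * w')) ∧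
      ∃ x₀ ∈ w'.support, coeff x₀ (C t * w') = coeff x₀ w := by
  obtain ⟨x₀, hx₀, hmax⟩ := exists_max_image w'.support (fun x => coeff x w / coeff x w')
    (support_nonempty.2 hw')
  refine ⟨coeff x₀ w / coeff x₀ w', fun x => ?_, x₀, hx₀, coeff_C_div_mul
    (mem_support_iff.1 hx₀) _⟩
  rw [coeff_C_mul]
  by_cases hx : x ∈ w'.support
  · calc coeff x w = coeff x w / coeff x w' * coeff x w' :=
          (Tropical.div_mul_cancel_of_ne_zero (mem_support_iff.1 hx) _).symm
      _ ≤ _ := mul_le_mul_left (hmax x hx) _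
  · rw [notMem_support_iff.1 hx, mul_zero]
    exact Tropical.le_zero _

end MvPolynomial

namespace MonomialOrder

variable {σ : Type*} {R : Type*} [CommSemiring R]

def leadingMonomials (m : MonomialOrder σ) (I : Ideal (MvPolynomial σ R)) : Set (σ →₀ ℕ) :=
  {u | ∃ f ∈ I, f ≠ 0 ∧ m.degree f = u}

lemma isUpperSet_leadingMonomials (m : MonomialOrder σ) (I : Ideal (MvPolynomial σ R)) :
    IsUpperSet (m.leadingMonomials I) := by
  rintro _ u' hle ⟨f, hfI, hf0, rfl⟩
  obtain ⟨k, rfl⟩ := exists_add_of_le hle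
  have : Nontrivial R := ⟨⟨m.leadingCoeff f, 0, m.leadingCoeff_ne_zero_iff.2 hf0⟩⟩
  have hlc : m.leadingCoeff (monomial k (1 : R)) * m.leadingCoeff f ≠ 0 := by
    rw [leadingCoeff_monomial, one_mul]
    exact m.leadingCoeff_ne_zero_iff.2 hf0
  refine ⟨monomial k 1 * f, I.mul_mem_left _ hfI, ?_, ?_⟩
  · rw [← m.leadingCoeff_ne_zero_iff, m.leadingCoeff_mul_of_mul_leadingCoeff_ne_zero hlc]
    exact hlc
  · classical
    rw [m.degree_mul_of_mul_leadingCoeff_ne_zero hlc, degree_monomial, if_neg one_ne_zero,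
      add_comm]

lemma leadingMonomials_mono (m : MonomialOrder σ) {I J : Ideal (MvPolynomial σ R)} (h : I ≤ J) :
    m.leadingMonomials I ⊆ m.leadingMonomials J := by
  rintro _ ⟨f, hfI, hf0, rfl⟩
  exact ⟨f, h hfI, hf0, rfl⟩

end MonomialOrder

theorem WellQuasiOrderedLE.not_strictMono_of_isUpperSet {α : Type*} [Preorder α]
    [WellQuasiOrderedLE α] {s : ℕ → Set α} (hs : ∀ k, IsUpperSet (s k)) : ¬ StrictMono s := by
  intro hmono
  choose a has hnot using fun k => Set.exists_of_ssubset (hmono (Nat.lt_succ_self k))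
  obtain ⟨i, j, hij, hle⟩ := wellQuasiOrdered_le a
  exact hnot j (hmono.monotone hij (hs (i + 1) hle (has i)))

namespace IsHomogTropicalIdeal

open scoped MonomialOrder

variable {n : ℕ} {R₀ : Type*} [LinearOrderedAddCommGroupWithTop R₀]
  {I J : Ideal (MvPolynomial (Fin (n + 1)) (Tropical R₀))} {d : ℕ}
  {c v w w' : MvPolynomial (Fin (n + 1)) (Tropical R₀)}

/-- `w = C t * w' + h`, where `C t * w'` touches `w` from above at `x₀` and `h` is obtained by
eliminating `x₀`. -/
lemma mem_of_forall_support_ssubset (hJ : IsHomogTropicalIdeal J) (hIJ : I ≤ J)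
    (hwJ : w ∈ J) (hwd : w.IsHomogeneous d) (hw'I : w' ∈ I) (hw'0 : w' ≠ 0)
    (hw's : w'.support ⊆ w.support) (hss : ∀ h ∈ J, h.support ⊂ w.support → h ∈ I) : w ∈ I := by
  obtain ⟨t, hdom, x₀, hx₀, htouch⟩ := exists_C_mul_ge_of_ne_zero w hw'0
  have hvI : C t * w' ∈ I := I.mul_mem_left _ hw'I
  have hvs : (C t * w').support ⊆ w.support := (support_C_mul_subset t w').trans hw's
  obtain ⟨h, hhJ, -, hhx₀, hle, hne⟩ := hJ.2 d w hwJ _ (hIJ hvI) hwd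
    (hwd.of_support_subset hvs) x₀ htouch.symm (mem_support_iff.1 (hw's hx₀))
  have hhs : h.support ⊂ w.support :=
    (ssubset_iff_of_subset ((support_subset_union_of_forall_add_le hle).trans
      (union_subset subset_rfl hvs))).2 ⟨x₀, hw's hx₀, notMem_support_iff.2 hhx₀⟩
  have hsplit : w = C t * w' + h := by
    ext x
    rw [coeff_add]
    exact Tropical.eq_add_of_le_of_add_le (hdom x) (hle x) (hne x)
  rw [hsplit]
  exact I.add_mem hvI (hss h hhJ hhs)

lemma eq_of_support_subset_of_coeff_eq (hJ : IsHomogTropicalIdeal J) (hcJ : c ∈ J)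
    (hcd : c.IsHomogeneous d) (hmin : ∀ h ∈ J, h.support ⊂ c.support → h = 0) (hwJ : w ∈ J)
    (hws : w.support ⊆ c.support) {e : Fin (n + 1) →₀ ℕ} (he : coeff e w = coeff e c)
    (he0 : coeff e w ≠ 0) : w = c := by
  obtain ⟨h, hhJ, -, hhe, hle, hne⟩ :=
    hJ.2 d w hwJ c hcJ (hcd.of_support_subset hws) hcd e he he0
  have hh0 : h = 0 := hmin h hhJ <|
    (ssubset_iff_of_subset ((support_subset_union_of_forall_add_le hle).trans
      (union_subset hws subset_rfl))).2
      ⟨e, hws (mem_support_iff.2 he0), notMem_support_iff.2 hhe⟩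
  ext x
  by_contra hx
  have hsum := hne x hx
  rw [hh0, coeff_zero, eq_comm, Tropical.add_eq_zero_iff_of_orderTop] at hsum
  exact hx (hsum.1.trans hsum.2.symm)

variable {m : MonomialOrder (Fin (n + 1))}

lemma exists_card_sdiff_support_lt (hI : IsHomogTropicalIdeal I) (hJ : IsHomogTropicalIdeal J)
    (hIJ : I ≤ J)
    (hlower : ∀ h ∈ J, h.IsHomogeneous d → h ≠ 0 → m.degree h ≺[m] m.degree c → h ∈ I)
    (hcJ : c ∈ J) (hcd : c.IsHomogeneous d) (hc0 : c ≠ 0)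
    (hvI : v ∈ I) (hvd : v.IsHomogeneous d) (hvc : m.degree v ≼[m] m.degree c)
    (hcoeff : coeff (m.degree c) v = coeff (m.degree c) c) (hsub : ¬ v.support ⊆ c.support) :
    ∃ v' ∈ I, v'.IsHomogeneous d ∧ m.degree v' ≼[m] m.degree c ∧
      coeff (m.degree c) v' = coeff (m.degree c) c ∧
      #(v'.support \ c.support) < #(v.support \ c.support) := by
  set u := m.degree c
  have hcu : coeff u c ≠ 0 := m.coeff_degree_ne_zero_iff.2 hc0
  have hbound : ∀ x ∈ v.support ∪ c.support, x ≼[m] u := by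
    intro x hx
    rcases mem_union.1 hx with hx | hx
    · exact (m.le_degree hx).trans hvc
    · exact m.le_degree hx
  obtain ⟨e, hev, hec⟩ := not_subset.1 hsub
  -- Cancelling `u` between `v` and `c` in `J` gives a remainder below `u`, hence in `I` ...
  obtain ⟨h, hhJ, hhd, hhu, hle, hne⟩ := hJ.2 d v (hIJ hvI) c hcJ hvd hcd u hcoeff (hcoeff ▸ hcu)
  have hhs := support_subset_union_of_forall_add_le hle
  have hhe : coeff e h = coeff e v := by
    have hce := notMem_support_iff.1 hec
    rw [hne e (by rw [hce]; exact mem_support_iff.1 hev), hce, add_zero]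
  have hh0 : h ≠ 0 := fun h0 => mem_support_iff.1 hev (by rw [← hhe, h0, coeff_zero])
  have hhI : h ∈ I := by
    refine hlower h hhJ hhd hh0
      (lt_of_le_of_ne (m.degree_le_iff.2 fun x hx => hbound x (hhs hx)) fun hdeg => ?_)
    have hmem := m.degree_mem_support hh0
    rw [m.toSyn.injective hdeg] at hmem
    exact mem_support_iff.1 hmem hhu
  -- ... where it cancels `e` against `v` while keeping the coefficient at `u`.
  obtain ⟨v', hv'I, hv'd, hv'e, hle', hne'⟩ :=
    hI.2 d v hvI h hhI hvd hhd e hhe.symm (mem_support_iff.1 hev)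
  have hv's : v'.support ⊆ v.support ∪ c.support :=
    (support_subset_union_of_forall_add_le hle').trans (union_subset subset_union_left hhs)
  refine ⟨v', hv'I, hv'd, m.degree_le_iff.2 fun x hx => hbound x (hv's hx), ?_, ?_⟩
  · rw [hne' u (by rw [hhu, hcoeff]; exact hcu), hhu, add_zero, hcoeff]
  · have hsd : v'.support \ c.support ⊆ (v.support \ c.support).erase e := by
      intro x hx
      obtain ⟨hxv', hxc⟩ := mem_sdiff.1 hx
      refine mem_erase.2 ⟨?_, mem_sdiff.2 ⟨(mem_union.1 (hv's hxv')).resolve_right hxc, hxc⟩⟩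
      rintro rfl
      exact mem_support_iff.1 hxv' hv'e
    exact (card_le_card hsd).trans_lt (card_erase_lt_of_mem (mem_sdiff.2 ⟨hev, hec⟩))

lemma exists_ne_zero_support_subset (hI : IsHomogTropicalIdeal I) (hJ : IsHomogTropicalIdeal J)
    (hIJ : I ≤ J)
    (hlower : ∀ h ∈ J, h.IsHomogeneous d → h ≠ 0 → m.degree h ≺[m] m.degree c → h ∈ I)
    (hcJ : c ∈ J) (hcd : c.IsHomogeneous d) (hc0 : c ≠ 0)
    (hvI : v ∈ I) (hvd : v.IsHomogeneous d) (hvc : m.degree v ≼[m] m.degree c)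
    (hcoeff : coeff (m.degree c) v = coeff (m.degree c) c) :
    ∃ e ∈ I, e ≠ 0 ∧ e.support ⊆ c.support := by
  induction hk : #(v.support \ c.support) using Nat.strong_induction_on generalizing v with
  | _ k ih =>
  by_cases hsub : v.support ⊆ c.support
  · refine ⟨v, hvI, fun hv0 => hc0 ?_, hsub⟩
    rwa [hv0, coeff_zero, eq_comm, m.coeff_degree_eq_zero_iff] at hcoeff
  · obtain ⟨v', hv'I, hv'd, hv'c, hv'coeff, hlt⟩ :=
      exists_card_sdiff_support_lt hI hJ hIJ hlower hcJ hcd hc0 hvI hvd hvc hcoeff hsub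
    exact ih _ (hk ▸ hlt) hv'I hv'd hv'c hv'coeff rfl

lemma mem_of_support_minimal (hI : IsHomogTropicalIdeal I) (hJ : IsHomogTropicalIdeal J)
    (hIJ : I ≤ J)
    (hlower : ∀ h ∈ J, h.IsHomogeneous d → h ≠ 0 → m.degree h ≺[m] m.degree c → h ∈ I)
    (hcJ : c ∈ J) (hcd : c.IsHomogeneous d) (hc0 : c ≠ 0)
    (hmin : ∀ h ∈ J, h.support ⊂ c.support → h = 0) (hLM : m.degree c ∈ m.leadingMonomials I) :
    c ∈ I := by
  obtain ⟨g, hgI, hg0, hgc⟩ := hLM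
  set u := m.degree c
  have hcu : coeff u c ≠ 0 := m.coeff_degree_ne_zero_iff.2 hc0
  -- `I` is homogeneous, so the degree-`d` part of `g` still has leading monomial `u`.
  set g' := homogeneousComponent d g
  have hg'u : coeff u g' ≠ 0 := by
    rw [coeff_homogeneousComponent, if_pos (by_contra fun h => hcu (hcd.coeff_eq_zero h)), ← hgc]
    exact m.coeff_degree_ne_zero_iff.2 hg0
  have hg'g : g'.support ⊆ g.support := by
    rw [support_homogeneousComponent]
    exact filter_subset _ _
  have hvu : m.degree (C (coeff u c / coeff u g') * g') ≼[m] u := by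
    rw [← hgc]
    exact m.degree_le_degree_of_support_subset ((support_C_mul_subset _ _).trans hg'g)
  obtain ⟨e, heI, he0, hec⟩ := exists_ne_zero_support_subset hI hJ hIJ hlower hcJ hcd hc0
    (I.mul_mem_left _ (hI.1 g hgI d)) ((homogeneousComponent_isHomogeneous d g).C_mul _) hvu
    (coeff_C_div_mul hg'u _)
  obtain ⟨x, hx⟩ := support_nonempty.2 he0
  have hscaled : C (coeff x c / coeff x e) * e = c :=
    hJ.eq_of_support_subset_of_coeff_eq hcJ hcd hmin (hIJ (I.mul_mem_left _ heI))
      ((support_C_mul_subset _ _).trans hec) (coeff_C_div_mul (mem_support_iff.1 hx) _)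
      (by rw [coeff_C_div_mul (mem_support_iff.1 hx)]; exact mem_support_iff.1 (hec hx))
  exact hscaled ▸ I.mul_mem_left _ heI

theorem le_of_leadingMonomials_subset (hI : IsHomogTropicalIdeal I) (hJ : IsHomogTropicalIdeal J)
    (hIJ : I ≤ J) (hLM : m.leadingMonomials J ⊆ m.leadingMonomials I) : J ≤ I := by
  suffices hhom : ∀ d, ∀ w ∈ J, w.IsHomogeneous d → w ∈ I by
    intro f hf
    rw [← sum_homogeneousComponent f]
    exact I.sum_mem fun d _ => hhom d _ (hJ.1 f hf d) (homogeneousComponent_isHomogeneous d f)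
  intro d w
  induction w using (InvImage.wf (fun w => toLex (m.toSyn (m.degree w), #w.support))
    wellFounded_lt).induction with
  | _ w ih =>
  intro hwJ hwd
  rcases eq_or_ne w 0 with rfl | hw0
  · exact I.zero_mem
  have hlower : ∀ h ∈ J, h.IsHomogeneous d → h ≠ 0 → m.degree h ≺[m] m.degree w → h ∈ I :=
    fun h hhJ hhd _ hlt =>
      ih h (Prod.Lex.toLex_lt_toLex'.2 ⟨hlt.le, fun heq => absurd heq hlt.ne⟩) hhJ hhd
  have hss : ∀ h ∈ J, h.support ⊂ w.support → h ∈ I := fun h hhJ hhs =>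
    ih h (Prod.Lex.toLex_lt_toLex'.2 ⟨m.degree_le_degree_of_support_subset hhs.subset,
      fun _ => card_lt_card hhs⟩) hhJ (hwd.of_support_subset hhs.subset)
  by_cases hmin : ∀ h ∈ J, h.support ⊂ w.support → h = 0
  · exact mem_of_support_minimal hI hJ hIJ hlower hwJ hwd hw0 hmin (hLM ⟨w, hwJ, hw0, rfl⟩)
  · push Not at hmin
    obtain ⟨w', hw'J, hw's, hw'0⟩ := hmin
    exact hJ.mem_of_forall_support_ssubset hIJ hwJ hwd (hss w' hw'J hw's) hw'0 hw's.subset hss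

end IsHomogTropicalIdeal

/-- **Ascending chain condition for tropical ideals.**  There is no infinite strictly
ascending chain `I₁ ⊊ I₂ ⊊ I₃ ⊊ ⋯` of homogeneous tropical ideals in `R[x₀,…,xₙ]`. -/
theorem no_infinite_ascending_chain {n : ℕ} {R₀ : Type*}
    [LinearOrderedAddCommGroupWithTop R₀] :
    ¬ ∃ c : ℕ → Ideal (MvPolynomial (Fin (n + 1)) (Tropical R₀)),
        (∀ k, IsHomogTropicalIdeal (c k)) ∧ ∀ k, c k < c (k + 1) := by
  rintro ⟨c, hc, hlt⟩
  let m : MonomialOrder (Fin (n + 1)) := MonomialOrder.lex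
  refine WellQuasiOrderedLE.not_strictMono_of_isUpperSet
    (fun k => m.isUpperSet_leadingMonomials (c k)) (strictMono_nat_of_lt_succ fun k => ?_)
  refine (m.leadingMonomials_mono (hlt k).le).lt_of_not_ge fun hLM => (hlt k).not_ge ?_
  exact (hc k).le_of_leadingMonomials_subset (hc (k + 1)) (hlt k).le hLM
end

section
/- The Hilbert function of a homogeneous tropical ideal I ⊆ R[x₀,…,xₙ], defined by H_I(d) = rank of the valuated matroid M_d(I) on the degree-d monomials, agrees with a polynomial in d for all sufficiently large d. -/
/-!
Fix a monomial order. The elimination axiom lets one run Gaussian elimination inside each graded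
piece `I_d`: from two elements containing a monomial `w` it produces an element without `w`,
supported on the union of the two supports, whose leading monomial is the larger of the two.
Eliminating, one monomial at a time, the monomials outside an independent set `S` from a family
of elements of `I_d` with distinct leading monomials loses one element per step, and nothing can
survive; hence `H_I(d)` is the number of degree-`d` monomials that are not leading monomials of
`I_d`. Leading monomials form a monomial ideal, finitely generated by Dickson's lemma, so by
inclusion–exclusion this count is an alternating sum, over sets `t` of generators, of the number
`(d - |lcm t| + n).choose n` of degree-`d` multiples of `lcm t`: a polynomial in `d` once `d`
exceeds every `|lcm t|`.
-/

open MvPolynomial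

open Finset
open scoped MonomialOrder

namespace Finset

theorem card_filter_forall_not_le {α R : Type*} [SemilatticeSup α] [OrderBot α] [DecidableLE α]
    [CommRing R] (E G : Finset α) :
    (#{u ∈ E | ∀ g ∈ G, ¬g ≤ u} : R) =
      ∑ t ∈ G.powerset, (-1 : R) ^ #t * #{u ∈ E | t.sup id ≤ u} := by
  classical
  have indicator (u : α) : (if ∀ g ∈ G, ¬g ≤ u then 1 else 0 : R) =
      ∑ t ∈ G.powerset, (-1 : R) ^ #t * if t.sup id ≤ u then 1 else 0 := by
    rw [← prod_boole]
    calc ∏ g ∈ G, (if ¬g ≤ u then (1 : R) else 0)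
        = ∏ g ∈ G, (1 - if g ≤ u then 1 else 0) := by
          refine prod_congr rfl fun g _ => ?_
          split_ifs <;> simp
      _ = _ := by
          simp only [prod_sub, prod_const_one, mul_one, prod_boole, Finset.sup_le_iff, id]
  simp only [natCast_card_filter, indicator, mul_sum]
  exact sum_comm

theorem card_filter_le_finsuppAntidiag {σ : Type*} [Fintype σ] [DecidableEq σ]
    (s : σ →₀ ℕ) {d : ℕ} (hd : s.degree ≤ d) :
    #{u ∈ univ.finsuppAntidiag d | s ≤ u} =
      #((univ : Finset σ).finsuppAntidiag (d - s.degree)) := by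
  have hmem {e : ℕ} {u : σ →₀ ℕ} : u ∈ univ.finsuppAntidiag e ↔ u.degree = e := by
    simp [Finsupp.degree_eq_sum]
  refine card_nbij' (· - s) (· + s) ?_ ?_ ?_ ?_
  · intro u hu
    simp only [coe_filter, Set.mem_ofPred_eq, mem_coe, hmem] at hu ⊢
    have := congrArg Finsupp.degree (tsub_add_cancel_of_le hu.2)
    rw [map_add] at this
    omega
  · intro u hu
    simp only [coe_filter, Set.mem_ofPred_eq, mem_coe, hmem, map_add] at hu ⊢
    exact ⟨by omega, le_add_self⟩
  · intro u hu
    simp only [coe_filter, Set.mem_ofPred_eq] at hu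
    exact tsub_add_cancel_of_le hu.2
  · intro u _
    exact add_tsub_cancel_right u s

theorem card_finsuppAntidiag_sub_eq_eval_preHilbertPoly (n : ℕ) {k d : ℕ} (hkd : k ≤ d) :
    (#((univ : Finset (Fin (n + 1))).finsuppAntidiag (d - k)) : ℚ) =
      (Polynomial.preHilbertPoly ℚ n k).eval (d : ℚ) := by
  rw [Polynomial.preHilbertPoly_eq_choose_sub_add ℚ n hkd, card_finsuppAntidiag_nat_eq_choose,
    card_univ, Fintype.card_fin, show n + 1 + (d - k) - 1 = d - k + n by omega,
    Nat.choose_symm_add]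

end Finset

open scoped Classical in
theorem AddSemigroupIdeal.exists_card_filter_notMem_eq_eval {n : ℕ}
    (J : AddSemigroupIdeal (Fin (n + 1) →₀ ℕ)) :
    ∃ (P : Polynomial ℚ) (N : ℕ), ∀ d, N ≤ d →
      (#{u ∈ (univ : Finset (Fin (n + 1))).finsuppAntidiag d | u ∉ J} : ℚ) = P.eval (d : ℚ) := by
  obtain ⟨G, rfl⟩ := fg_iff.1 J.fg_of_wellQuasiOrderedLE
  have hmem (u : Fin (n + 1) →₀ ℕ) : u ∈ closure (G : Set _) ↔ ∃ g ∈ G, g ≤ u := by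
    simp only [mem_closure'', le_iff_exists_add', mem_coe]
    exact ⟨fun ⟨y, g, hg, h⟩ => ⟨g, hg, y, h.symm⟩, fun ⟨g, hg, y, h⟩ => ⟨y, g, hg, h.symm⟩⟩
  let k (t : Finset (Fin (n + 1) →₀ ℕ)) := (t.sup id).degree
  refine ⟨∑ t ∈ G.powerset, (-1 : ℚ) ^ #t • Polynomial.preHilbertPoly ℚ n (k t),
    G.powerset.sup k, fun d hd => ?_⟩
  have hk {t} (ht : t ∈ G.powerset) : k t ≤ d := (le_sup ht).trans hd
  have hfilter : {u ∈ (univ : Finset (Fin (n + 1))).finsuppAntidiag d | u ∉ closure (G : Set _)} =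
      {u ∈ (univ : Finset (Fin (n + 1))).finsuppAntidiag d | ∀ g ∈ G, ¬g ≤ u} := by
    simp only [hmem, not_exists, not_and]
  rw [hfilter, card_filter_forall_not_le, Polynomial.eval_finsetSum]
  refine sum_congr rfl fun t ht => ?_
  rw [Polynomial.eval_smul, smul_eq_mul, card_filter_le_finsuppAntidiag _ (hk ht),
    card_finsuppAntidiag_sub_eq_eval_preHilbertPoly n (hk ht)]

theorem Tropical.isUnit_of_ne_zero {R₀ : Type*} [LinearOrderedAddCommGroupWithTop R₀]
    {a : Tropical R₀} (ha : a ≠ 0) : IsUnit a := by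
  refine IsUnit.of_mul_eq_one a⁻¹ (Tropical.untrop_injective ?_)
  have : Tropical.untrop a ≠ ⊤ := fun h => ha (Tropical.untrop_injective h)
  simp [LinearOrderedAddCommGroupWithTop.add_neg_cancel_of_ne_top this]

theorem MonomialOrder.degree_monomial_one_mul {σ R : Type*} [CommSemiring R]
    (m : MonomialOrder σ) (v : σ →₀ ℕ) {f : MvPolynomial σ R} (hf : f ≠ 0) :
    m.degree (monomial v 1 * f) = v + m.degree f := by
  classical
  have : (1 : R) ≠ 0 := fun h => hf (by rw [← one_mul f, ← C_1, h, C_0, zero_mul])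
  rw [m.degree_mul_of_isRegular_left (by rw [m.leadingCoeff_monomial]; exact isRegular_one) hf,
    m.degree_monomial, if_neg this]

namespace IsHomogTropicalIdeal

variable {n : ℕ} {R₀ : Type*} [LinearOrderedAddCommGroupWithTop R₀]
  (m : MonomialOrder (Fin (n + 1))) {I : Ideal (MvPolynomial (Fin (n + 1)) (Tropical R₀))}

theorem exists_eliminate_s7 (hI : IsHomogTropicalIdeal I) {d : ℕ}
    {f g : MvPolynomial (Fin (n + 1)) (Tropical R₀)} (hf : f ∈ I) (hg : g ∈ I)
    (hfd : f.IsHomogeneous d) (hgd : g.IsHomogeneous d) {w : Fin (n + 1) →₀ ℕ}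
    (hwf : coeff w f ≠ 0) (hwg : coeff w g ≠ 0) :
    ∃ h ∈ I, h.IsHomogeneous d ∧ coeff w h = 0 ∧ ∀ v, coeff v g = 0 → coeff v h = coeff v f := by
  let c := (Tropical.isUnit_of_ne_zero hwf).unit * (Tropical.isUnit_of_ne_zero hwg).unit⁻¹
  have hcoeff (v) : coeff v (C (c : Tropical R₀) * g) = c * coeff v g := coeff_C_mul _ _ _
  obtain ⟨h, hhI, hhd, hw, hle, hne⟩ := hI.2 d f hf (C (c : Tropical R₀) * g)
    (I.mul_mem_left _ hg) hfd (by simpa using (isHomogeneous_C _ _).mul hgd) w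
    (by rw [hcoeff, Units.val_mul, mul_assoc, IsUnit.val_inv_mul, mul_one, IsUnit.unit_spec])
    hwf
  refine ⟨h, hhI, hhd, hw, fun v hv => ?_⟩
  by_cases hvf : coeff v f = 0
  · have := hle v
    rw [hvf, hcoeff, hv, mul_zero, add_zero] at this
    exact hvf ▸ le_antisymm (Tropical.le_zero _) this
  · rw [hne v (by rwa [hcoeff, hv, mul_zero]), hcoeff, hv, mul_zero, add_zero]

variable (I) in
def avoiding (d : ℕ) (V : Finset (Fin (n + 1) →₀ ℕ)) :
    Set (MvPolynomial (Fin (n + 1)) (Tropical R₀)) :=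
  {q | q ∈ I ∧ q.IsHomogeneous d ∧ q ≠ 0 ∧ Disjoint q.support V}

theorem degree_mem_image_avoiding_insert (hI : IsHomogTropicalIdeal I) {d : ℕ}
    {V : Finset (Fin (n + 1) →₀ ℕ)} {w : Fin (n + 1) →₀ ℕ}
    {q q₀ : MvPolynomial (Fin (n + 1)) (Tropical R₀)} (hq : q ∈ avoiding I d V)
    (hq₀ : q₀ ∈ avoiding I d V) (hw : coeff w q₀ ≠ 0) (hlt : m.degree q₀ ≺[m] m.degree q) :
    m.degree q ∈ m.degree '' avoiding I d (insert w V) := by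
  obtain ⟨hqI, hqd, hq0, hqV⟩ := hq
  obtain ⟨hq₀I, hq₀d, -, hq₀V⟩ := hq₀
  by_cases hwq : coeff w q = 0
  · exact ⟨q, ⟨hqI, hqd, hq0, disjoint_insert_right.2 ⟨notMem_support_iff.2 hwq, hqV⟩⟩, rfl⟩
  obtain ⟨h, hhI, hhd, hhw, hhq⟩ := hI.exists_eliminate_s7 hqI hq₀I hqd hq₀d hwq hw
  have hsupp : h.support ⊆ q.support ∪ q₀.support := fun v hv => by
    by_contra hv'
    simp only [mem_union, not_or, notMem_support_iff] at hv'
    exact mem_support_iff.1 hv (by rw [hhq v hv'.2, hv'.1])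
  have hlead : coeff (m.degree q) h = m.leadingCoeff q := hhq _ (m.coeff_eq_zero_of_lt hlt)
  have hlead0 : coeff (m.degree q) h ≠ 0 := hlead ▸ m.leadingCoeff_ne_zero_iff.2 hq0
  have hdeg : m.degree h = m.degree q := by
    refine m.toSyn.injective (le_antisymm (m.degree_le_iff.2 fun c hc => ?_)
      (m.le_degree (mem_support_iff.2 hlead0)))
    rcases mem_union.1 (hsupp hc) with hc | hc
    · exact m.le_degree hc
    · exact (m.le_degree hc).trans hlt.le
  refine ⟨h, ⟨hhI, hhd, fun h0 => hlead0 (by simp [h0]), ?_⟩, hdeg⟩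
  exact disjoint_insert_right.2 ⟨notMem_support_iff.2 hhw,
    (disjoint_union_left.2 ⟨hqV, hq₀V⟩).mono_left hsupp⟩

theorem exists_card_le_succ (hI : IsHomogTropicalIdeal I) {d : ℕ}
    {V A : Finset (Fin (n + 1) →₀ ℕ)} (hA : ↑A ⊆ m.degree '' avoiding I d V)
    (w : Fin (n + 1) →₀ ℕ) :
    ∃ A' : Finset (Fin (n + 1) →₀ ℕ), ↑A' ⊆ m.degree '' avoiding I d (insert w V) ∧
      #A ≤ #A' + 1 := by
  choose! p hp hpA using fun u (hu : u ∈ A) => hA hu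
  have hmem_insert {u} (hu : u ∈ A) (hwu : coeff w (p u) = 0) :
      u ∈ m.degree '' avoiding I d (insert w V) := by
    obtain ⟨hpI, hpd, hp0, hpV⟩ := hp u hu
    exact ⟨p u, ⟨hpI, hpd, hp0, disjoint_insert_right.2 ⟨notMem_support_iff.2 hwu, hpV⟩⟩,
      hpA u hu⟩
  by_cases hw : ∃ u ∈ A, coeff w (p u) ≠ 0
  · -- Pivot on the element containing `w` with the smallest leading monomial.
    obtain ⟨u₀, hu₀, hmin⟩ := (A.filter fun u => coeff w (p u) ≠ 0).exists_min_image
      (m.toSyn ∘ m.degree ∘ p) (by simpa [Finset.Nonempty] using hw)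
    rw [mem_filter] at hu₀
    refine ⟨A.erase u₀, fun u hu => ?_, ?_⟩
    · obtain ⟨hne, hu⟩ := mem_erase.1 hu
      by_cases hwu : coeff w (p u) = 0
      · exact hmem_insert hu hwu
      · have hlt : m.degree (p u₀) ≺[m] m.degree (p u) := by
          refine lt_of_le_of_ne (hmin u (mem_filter.2 ⟨hu, hwu⟩)) fun h => hne ?_
          rw [← hpA u hu, ← hpA u₀ hu₀.1]
          exact (m.toSyn.injective h).symm
        rw [← hpA u hu]
        exact hI.degree_mem_image_avoiding_insert m (hp u hu) (hp u₀ hu₀.1) hu₀.2 hlt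
    · rw [card_erase_of_mem hu₀.1]
      omega
  · push Not at hw
    exact ⟨A, fun u hu => hmem_insert hu (hw u hu), by omega⟩

theorem exists_card_le_add_card (hI : IsHomogTropicalIdeal I) {d : ℕ}
    {A : Finset (Fin (n + 1) →₀ ℕ)} (hA : ↑A ⊆ m.degree '' avoiding I d ∅)
    (W : Finset (Fin (n + 1) →₀ ℕ)) :
    ∃ A' : Finset (Fin (n + 1) →₀ ℕ), ↑A' ⊆ m.degree '' avoiding I d W ∧ #A ≤ #A' + #W := by
  induction W using Finset.induction_on with
  | empty => exact ⟨A, hA, by simp⟩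
  | insert w W hwW ih =>
    obtain ⟨A₁, hA₁, hcard₁⟩ := ih
    obtain ⟨A₂, hA₂, hcard₂⟩ := hI.exists_card_le_succ m hA₁ w
    exact ⟨A₂, hA₂, by rw [card_insert_of_notMem hwW]; omega⟩

variable (I) in
def leadingIdeal : AddSemigroupIdeal (Fin (n + 1) →₀ ℕ) where
  carrier := {u | u ∈ m.degree '' avoiding I u.degree ∅}
  vadd_mem' := by
    rintro v _ ⟨f, ⟨hfI, hfd, hf0, -⟩, rfl⟩
    have hvf0 : monomial v 1 * f ≠ 0 := by
      rwa [Ne, isRegular_one.monomial.left.mul_left_eq_zero_iff]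
    refine ⟨monomial v 1 * f, ⟨I.mul_mem_left _ hfI, ?_, hvf0, by simp⟩,
      m.degree_monomial_one_mul v hf0⟩
    rw [vadd_eq_add, map_add]
    exact (isHomogeneous_monomial 1 rfl).mul hfd

open scoped Classical in
theorem tropicalHilbert_eq_card (hI : IsHomogTropicalIdeal I) (d : ℕ) :
    tropicalHilbert I d =
      #{u ∈ (univ : Finset (Fin (n + 1))).finsuppAntidiag d | u ∉ leadingIdeal m I} := by
  set E := (univ : Finset (Fin (n + 1))).finsuppAntidiag d
  have hE {u : Fin (n + 1) →₀ ℕ} : u ∈ E ↔ u.degree = d := by simp [E, Finsupp.degree_eq_sum]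
  have hL {u : Fin (n + 1) →₀ ℕ} (hu : u.degree = d) :
      u ∈ leadingIdeal m I ↔ u ∈ m.degree '' avoiding I d ∅ := by
    subst hu; rfl
  refine IsGreatest.csSup_eq ⟨⟨_, rfl, fun u hu => hE.1 (mem_filter.1 hu).1, ?_⟩, ?_⟩
  · intro f hf hfd hf0 hsub
    have hfdeg := (hfd.degree_eq_sum_deg_support (m.degree_mem_support hf0)).symm
    exact (mem_filter.1 (hsub (m.degree_mem_support hf0))).2
      ((hL hfdeg).2 ⟨f, ⟨hf, hfd, hf0, disjoint_empty_right _⟩, rfl⟩)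
  · -- Eliminating the monomials outside `S` costs at most one element per monomial, and no
    -- element can survive because its support would lie in the independent set `S`.
    rintro _ ⟨S, rfl, hSd, hS⟩
    have hSE : S ⊆ E := fun u hu => hE.2 (hSd u hu)
    obtain ⟨A', hA', hcard⟩ := hI.exists_card_le_add_card m
      (A := {u ∈ E | u ∈ leadingIdeal m I})
      (fun u hu => (hL (hE.1 (mem_filter.1 hu).1)).1 (mem_filter.1 hu).2) (E \ S)
    have hA'empty : A' = ∅ := eq_empty_of_forall_notMem fun u hu => by
      obtain ⟨q, ⟨hqI, hqd, hq0, hqV⟩, -⟩ := hA' hu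
      refine hS q hqI hqd hq0 fun v hv => ?_
      by_contra hvS
      exact disjoint_left.1 hqV hv
        (mem_sdiff.2 ⟨hE.2 (hqd.degree_eq_sum_deg_support hv).symm, hvS⟩)
    rw [hA'empty, card_empty, card_sdiff_of_subset hSE] at hcard
    have := card_filter_add_card_filter_not (s := E) (· ∈ leadingIdeal m I)
    have := card_le_card hSE
    omega

end IsHomogTropicalIdeal

/-- **Hilbert functions of tropical ideals are eventually polynomial.**  The Hilbert
function of a homogeneous tropical ideal `I ⊆ R[x₀,…,xₙ]` agrees with a polynomial for
all sufficiently large degrees. -/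
theorem tropicalHilbert_eventually_polynomial {n : ℕ} {R₀ : Type*}
    [LinearOrderedAddCommGroupWithTop R₀]
    (I : Ideal (MvPolynomial (Fin (n + 1)) (Tropical R₀))) (hI : IsHomogTropicalIdeal I) :
    ∃ (P : Polynomial ℚ) (N : ℕ), ∀ d : ℕ, N ≤ d →
      (tropicalHilbert I d : ℚ) = P.eval (d : ℚ) := by
  obtain ⟨P, N, hP⟩ :=
    (IsHomogTropicalIdeal.leadingIdeal MonomialOrder.lex I).exists_card_filter_notMem_eq_eval
  exact ⟨P, N, fun d hd => by rw [hI.tropicalHilbert_eq_card MonomialOrder.lex, hP d hd]⟩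
end

section
/- The ideal I generated by x ⊕ y in the tropical polynomial semiring R̄[x,y] is not a tropical ideal: the polynomial x² ⊕ y² is not in I, but the vector elimination axiom applied to x⊙(x⊕y) = x² ⊕ xy and y⊙(x⊕y) = xy ⊕ y² (eliminating the monomial xy) would require x² ⊕ y² to lie in the degree-2 part of I. -/
open MvPolynomial

/-- The ideal of `R̄[x,y]` generated by `x ⊕ y`. -/
noncomputable def Ixy : Ideal (MvPolynomial (Fin 2) TropR) :=
  Ideal.span {X 0 + X 1}

noncomputable def u20 : Fin 2 →₀ ℕ := Finsupp.single 0 2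
noncomputable def u02 : Fin 2 →₀ ℕ := Finsupp.single 1 2
noncomputable def u11 : Fin 2 →₀ ℕ := Finsupp.single 0 1 + Finsupp.single 1 1

lemma trop_one_ne_zero : (1 : TropR) ≠ 0 := fun h => by simpa using congrArg Tropical.untrop h

lemma ne1 : u20 ≠ u11 := fun h => by simpa [u20, u11] using DFunLike.congr_fun h 1
lemma ne2 : u02 ≠ u11 := fun h => by simpa [u02, u11] using DFunLike.congr_fun h 0
lemma ne3 : u20 ≠ u02 := fun h => by simpa [u20, u02] using DFunLike.congr_fun h 1
lemma ne1' : u11 ≠ u20 := Ne.symm ne1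
lemma ne2' : u11 ≠ u02 := Ne.symm ne2
lemma ne3' : u02 ≠ u20 := Ne.symm ne3

lemma f_eq : (X 0 * (X 0 + X 1) : MvPolynomial (Fin 2) TropR)
    = monomial u20 1 + monomial u11 1 := by
  rw [mul_add]; simp [u20, u11, X, monomial_mul, ← Finsupp.single_add]

lemma g_eq : (X 1 * (X 0 + X 1) : MvPolynomial (Fin 2) TropR)
    = monomial u11 1 + monomial u02 1 := by
  rw [mul_add]; simp [u02, u11, X, monomial_mul, ← Finsupp.single_add, add_comm]

lemma sq_eq : (X 0 ^ 2 + X 1 ^ 2 : MvPolynomial (Fin 2) TropR)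
    = monomial u20 1 + monomial u02 1 := by
  simp [u20, u02, X_pow_eq_monomial]

lemma sq_not_mem : (X 0 ^ 2 + X 1 ^ 2 : MvPolynomial (Fin 2) TropR) ∉ Ixy := by
  rw [Ixy, Ideal.mem_span_singleton']
  rintro ⟨q, hq⟩
  rw [mul_add] at hq
  have h11 := congrArg (coeff u11) hq
  have h20 := congrArg (coeff u20) hq
  rw [coeff_add, sq_eq, coeff_add, coeff_monomial, coeff_monomial] at h11 h20
  rw [if_neg ne1, if_neg ne2] at h11
  rw [if_pos rfl, if_neg (fun h => ne3 h.symm)] at h20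
  rw [show u11 = Finsupp.single 1 1 + Finsupp.single 0 1 from add_comm _ _,
    coeff_mul_X] at h11
  rw [show (Finsupp.single 1 1 + Finsupp.single 0 1 : Fin 2 →₀ ℕ)
      = Finsupp.single 0 1 + Finsupp.single 1 1 from add_comm _ _, coeff_mul_X] at h11
  rw [add_zero] at h11
  rw [Tropical.add_eq_zero_iff] at h11
  rw [show u20 = Finsupp.single 0 1 + Finsupp.single 0 1 from by
      simp [u20, ← Finsupp.single_add], coeff_mul_X, coeff_mul_X'] at h20
  rw [if_neg (by simp [Finsupp.single_apply]), add_zero, add_zero] at h20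
  exact trop_one_ne_zero (h11.2 ▸ h20).symm


/-- The ideal generated by `x ⊕ y` in `R̄[x,y]` is **not** a tropical ideal: the
polynomial `x² ⊕ y²` does not belong to it, although the vector elimination axiom
(applied to `x² ⊕ xy` and `xy ⊕ y²`, eliminating `xy`) would require it to lie in the
degree-2 part. -/
theorem span_xy_not_tropical :
    (X 0 ^ 2 + X 1 ^ 2 ∉ Ixy) ∧
    (X 0 * (X 0 + X 1) ∈ Ixy ∧ X 1 * (X 0 + X 1) ∈ Ixy) ∧
    ¬ IsHomogTropicalIdeal (n := 1) Ixy := by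
  have hgen : (X 0 + X 1 : MvPolynomial (Fin 2) TropR) ∈ Ixy := Ideal.subset_span rfl
  have hf : (X 0 * (X 0 + X 1) : MvPolynomial (Fin 2) TropR) ∈ Ixy :=
    Ideal.mul_mem_left _ _ hgen
  have hg : (X 1 * (X 0 + X 1) : MvPolynomial (Fin 2) TropR) ∈ Ixy :=
    Ideal.mul_mem_left _ _ hgen
  refine ⟨sq_not_mem, ⟨hf, hg⟩, ?_⟩
  rintro ⟨-, helim⟩
  have hfh : (X 0 * (X 0 + X 1) : MvPolynomial (Fin 2) TropR).IsHomogeneous 2 :=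
    (isHomogeneous_X _ _).mul ((isHomogeneous_X _ _).add (isHomogeneous_X _ _))
  have hgh : (X 1 * (X 0 + X 1) : MvPolynomial (Fin 2) TropR).IsHomogeneous 2 :=
    (isHomogeneous_X _ _).mul ((isHomogeneous_X _ _).add (isHomogeneous_X _ _))
  obtain ⟨h, hmem, -, h0, hle, hdiff⟩ := helim 2 _ hf _ hg hfh hgh u11
    (by simp [f_eq, g_eq, coeff_monomial, ne1, ne2])
    (by simp only [f_eq, coeff_add, coeff_monomial, if_neg ne1, if_pos rfl, zero_add]
        exact trop_one_ne_zero)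
  apply sq_not_mem
  have key : h = X 0 ^ 2 + X 1 ^ 2 := by
    apply MvPolynomial.ext; intro v
    rw [sq_eq, coeff_add, coeff_monomial, coeff_monomial]
    by_cases h1 : v = u20
    · subst h1
      rw [hdiff u20 (by
        simp only [f_eq, g_eq, coeff_add, coeff_monomial, if_pos rfl, if_neg ne1',
          if_neg ne3', add_zero]
        exact trop_one_ne_zero)]
      simp [f_eq, g_eq, coeff_monomial, ne1', ne3']
    · by_cases h2 : v = u02
      · subst h2
        rw [hdiff u02 (by
          simp only [f_eq, g_eq, coeff_add, coeff_monomial, if_pos rfl, if_neg ne2',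
            if_neg ne3, add_zero, zero_add]
          exact fun hh => trop_one_ne_zero hh.symm)]
        simp [f_eq, g_eq, coeff_monomial, ne2', ne3]
      · by_cases h3 : v = u11
        · subst h3
          rw [h0, if_neg ne1, if_neg ne2, add_zero]
        · have hle' := hle v
          rw [f_eq, g_eq] at hle'
          simp only [coeff_add, coeff_monomial, if_neg (fun hh : u20 = v => h1 hh.symm),
            if_neg (fun hh : u02 = v => h2 hh.symm), if_neg (fun hh : u11 = v => h3 hh.symm),
            add_zero, zero_add] at hle'
          have hz : coeff v h = 0 := le_antisymm (Tropical.le_zero (coeff v h)) hle'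
          rw [hz, if_neg (fun hh : u20 = v => h1 hh.symm),
            if_neg (fun hh : u02 = v => h2 hh.symm), add_zero]
  rwa [key] at hmem
end

section
/- The tropical ideal I = trop(⟨x − y⟩) ⊆ R̄[x,y] obtained by tropicalizing the ideal generated by x − y over a trivially valued field is not finitely generated as an ideal of the semiring R̄[x,y]. -/
open MvPolynomial

/-- Tropicalization of a polynomial over a trivially valued field: every nonzero
coefficient is replaced by `trop(0) = 1` (the tropical multiplicative unit) and the
operations are interpreted tropically. -/
noncomputable def tropPoly (g : MvPolynomial (Fin 2) ℚ) : MvPolynomial (Fin 2) TropR :=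
  ∑ u ∈ g.support, monomial u 1

/-- The tropicalization `trop(J)` of an ideal `J ⊆ K[x,y]`: the ideal of `R̄[x,y]`
generated by the tropicalizations of all elements of `J`. -/
noncomputable def tropIdeal (J : Ideal (MvPolynomial (Fin 2) ℚ)) :
    Ideal (MvPolynomial (Fin 2) TropR) :=
  Ideal.span (tropPoly '' (J : Set (MvPolynomial (Fin 2) ℚ)))

/-!
Call an ideal of `R̄[x,y]` *paired* for a relation `r` on exponents if every monomial `u` in
the support of one of its elements has a partner `u'` in the same support with `r u u'`.
Since `R̄` has no cancellation, supports of sums are unions and supports of products contain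
all sums of exponents, so for translation-invariant `r` this is an ideal.

Every `g ∈ ⟨x − y⟩` satisfies `g(1,1) = 0`, so `g` is not a single term; thus `trop(⟨x − y⟩)`
is paired for `≠`. If it were generated by a finite set `S` of degree `< D`, every generator,
and hence every element, would be paired for "`u ≠ u'` and the truncated difference `u - u'` has
degree `< D`", which is again translation invariant. But `x^D ⊕ y^D` lies in `trop(⟨x − y⟩)`,
and its two exponents differ by `D`.
-/

instance Tropical.instSubsingletonAddUnitsWithTop {Γ : Type*} [LinearOrder Γ] :
    Subsingleton (AddUnits (Tropical (WithTop Γ))) :=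
  subsingleton_of_forall_eq 0 fun u => AddUnits.ext (Tropical.add_eq_zero_iff.mp u.val_neg).1

def NearExponents {σ : Type*} (D : ℕ) (u u' : σ →₀ ℕ) : Prop :=
  u ≠ u' ∧ Finsupp.degree (u - u') < D

lemma NearExponents.add_left {σ : Type*} {D : ℕ} (a : σ →₀ ℕ) {u u' : σ →₀ ℕ}
    (h : NearExponents D u u') : NearExponents D (a + u) (a + u') :=
  ⟨fun he => h.1 (add_left_cancel he), by rw [add_tsub_add_eq_tsub_left]; exact h.2⟩

namespace MvPolynomial

variable {σ R : Type*} [CommSemiring R]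

lemma exists_ne_mem_support_of_eval_one_eq_zero {g : MvPolynomial σ R} (hg : eval 1 g = 0)
    {u : σ →₀ ℕ} (hu : u ∈ g.support) : ∃ u' ∈ g.support, u ≠ u' := by
  by_contra! h
  have hsingle : eval 1 g = coeff u g := by
    rw [eval_eq, Finset.sum_eq_single u (fun u' hu' hne => absurd (h u' hu') hne.symm)
      (absurd hu)]
    simp
  exact mem_support_iff.mp hu (hsingle ▸ hg)

section ZeroSumFree

variable [Subsingleton (AddUnits R)] {p q : MvPolynomial σ R} {u w : σ →₀ ℕ}

lemma mem_support_add_iff : u ∈ (p + q).support ↔ u ∈ p.support ∨ u ∈ q.support := by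
  simp only [mem_support_iff, coeff_add, ne_eq, add_eq_zero, not_and_or]

lemma add_mem_support_mul [NoZeroDivisors R] (hu : u ∈ p.support) (hw : w ∈ q.support) :
    u + w ∈ (p * q).support := by
  classical
  rw [mem_support_iff, coeff_mul, Ne, Finset.sum_eq_zero_iff, not_forall]
  exact ⟨(u, w), fun h => mul_ne_zero (mem_support_iff.mp hu) (mem_support_iff.mp hw)
    (h (Finset.HasAntidiagonal.mem_antidiagonal.mpr rfl))⟩

variable [NoZeroDivisors R]

def pairedSupportIdeal (r : (σ →₀ ℕ) → (σ →₀ ℕ) → Prop)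
    (hr : ∀ a {u u'}, r u u' → r (a + u) (a + u')) : Ideal (MvPolynomial σ R) where
  carrier := {p | ∀ u ∈ p.support, ∃ u' ∈ p.support, r u u'}
  zero_mem' := by simp
  add_mem' {p q} hp hq u hu := by
    rcases mem_support_add_iff.mp hu with hu | hu
    · obtain ⟨u', hu', h⟩ := hp u hu
      exact ⟨u', mem_support_add_iff.mpr (Or.inl hu'), h⟩
    · obtain ⟨u', hu', h⟩ := hq u hu
      exact ⟨u', mem_support_add_iff.mpr (Or.inr hu'), h⟩
  smul_mem' c p hp u hu := by
    classical
    obtain ⟨a, ha, w, hw, rfl⟩ := Finset.mem_add.mp (support_mul c p hu)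
    obtain ⟨w', hw', h⟩ := hp w hw
    exact ⟨a + w', add_mem_support_mul ha hw', hr a h⟩

lemma span_le_pairedSupportIdeal_near (S : Finset (MvPolynomial σ R))
    (hS : ∀ s ∈ S, s ∈ pairedSupportIdeal (· ≠ ·) fun a => (add_right_injective a).ne) :
    Ideal.span (S : Set (MvPolynomial σ R)) ≤
      pairedSupportIdeal (NearExponents (S.sup totalDegree + 1)) NearExponents.add_left := by
  refine Ideal.span_le.mpr fun s hs u hu => ?_
  obtain ⟨u', hu', hne⟩ := hS s hs u hu
  have hdeg : Finsupp.degree u < S.sup totalDegree + 1 :=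
    Nat.lt_succ_of_le ((le_totalDegree hu).trans (Finset.le_sup hs))
  exact ⟨u', hu', hne, (Finsupp.degree_mono tsub_le_self).trans_lt hdeg⟩

end ZeroSumFree

end MvPolynomial

lemma support_tropPoly (g : MvPolynomial (Fin 2) ℚ) : (tropPoly g).support = g.support := by
  classical
  ext u
  simp [tropPoly, mem_support_iff, coeff_sum, coeff_monomial]

lemma tropIdeal_span_X_sub_X_le :
    tropIdeal (Ideal.span {X 0 - X 1}) ≤
      pairedSupportIdeal (· ≠ ·) fun a => (add_right_injective a).ne := by
  refine Ideal.span_le.mpr ?_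
  rintro _ ⟨g, hg, rfl⟩ u hu
  obtain ⟨h, rfl⟩ := Ideal.mem_span_singleton'.mp hg
  rw [support_tropPoly] at hu ⊢
  exact exists_ne_mem_support_of_eval_one_eq_zero (by simp) hu

lemma tropPoly_X_pow_sub_X_pow_notMem {D : ℕ} (hD : D ≠ 0) :
    tropPoly (X 0 ^ D - X 1 ^ D) ∉
      pairedSupportIdeal (NearExponents D) NearExponents.add_left := by
  have hsingle : Finsupp.single (1 : Fin 2) D ≠ Finsupp.single 0 D :=
    (Finsupp.single_left_inj hD).not.mpr (by decide)
  have hmem : Finsupp.single 0 D ∈ (X 0 ^ D - X 1 ^ D : MvPolynomial (Fin 2) ℚ).support := by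
    simp [mem_support_iff, coeff_X_pow, hsingle]
  intro h
  obtain ⟨u', hu', hne, hlt⟩ := h (Finsupp.single 0 D) (by rwa [support_tropPoly])
  rw [support_tropPoly] at hu'
  obtain rfl : u' = Finsupp.single 1 D := by
    simpa [support_X_pow, hne.symm] using support_sub _ _ _ hu'
  simp [Finsupp.degree_eq_sum, Fin.sum_univ_two] at hlt

/-- **Tropical ideals need not be finitely generated.**  The tropical ideal
`trop(⟨x − y⟩) ⊆ R̄[x,y]`, the tropicalization of the ideal generated by `x − y` over a
trivially valued field, is not finitely generated as an ideal of `R̄[x,y]`. -/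
theorem tropIdeal_span_sub_not_fg :
    ¬ (tropIdeal (Ideal.span {X 0 - X 1})).FG := by
  rintro ⟨S, hS⟩
  have hle := span_le_pairedSupportIdeal_near S fun s hs =>
    tropIdeal_span_X_sub_X_le (hS ▸ Ideal.subset_span hs)
  rw [hS] at hle
  have hbinom : X 0 ^ (S.sup totalDegree + 1) - X 1 ^ (S.sup totalDegree + 1) ∈
      Ideal.span {(X 0 - X 1 : MvPolynomial (Fin 2) ℚ)} :=
    Ideal.mem_span_singleton.mpr (sub_dvd_pow_sub_pow _ _ _)
  exact tropPoly_X_pow_sub_X_pow_notMem (Nat.succ_ne_zero _)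
    (hle (Ideal.subset_span ⟨_, hbinom, rfl⟩))
end

section
/- For every a ∈ ℝ ∪ {∞}, the set J_a of all tropical polynomials f ∈ R̄[x] such that a ∈ V(f) (i.e., f(a) = ∞ or the minimum in f(a) is achieved at least twice) is a prime ideal of the semiring R̄[x]. -/
open Polynomial

/-- The value of the `i`-th term `bᵢ ⊙ aⁱ` of the tropical polynomial `f` at `a`. -/
noncomputable def trmVal (f : Polynomial TropR) (a : WithTop ℝ) (i : ℕ) : TropR :=
  f.coeff i * Tropical.trop a ^ i

/-- The tropical variety `V(f) ⊆ ℝ ∪ {∞}` of a univariate tropical polynomial: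
the points `a` with `f(a) = ∞` or where the minimum defining `f(a)` is attained by at
least two terms. -/
noncomputable def tropVa (f : Polynomial TropR) : Set (WithTop ℝ) :=
  {a | f.eval (Tropical.trop a) = 0 ∨
    ∃ i j : ℕ, i ≠ j ∧ trmVal f a i = f.eval (Tropical.trop a) ∧
      trmVal f a j = f.eval (Tropical.trop a)}

/-!
The minimum defining `f(a)` is attained at a set `argminTerms f a` of exponents, and
`a ∈ V(f)` says exactly that this set has at least two elements (when `f(a) = ∞` every exponent
attains it). The exponents attaining the minimum of the summand with the smaller value still
attain it in `f ⊕ g`. When `f(a) ⊙ g(a)` is finite, the exponents attaining the minimum of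
`f ⊙ g` are exactly the sums `i + j` of attaining exponents of `f` and `g`, because a finite
product of two terms bounded below by `f(a)` and `g(a)` equals `f(a) ⊙ g(a)` only if both are
minimal. So `J_a` absorbs products, and if `f` and `g` each have a unique minimal term, so does
`f ⊙ g`.
-/

open Tropical Pointwise Finset.HasAntidiagonal

namespace Tropical

variable {R ι : Type*}

theorem sum_eq_inf [LinearOrder R] [OrderTop R] (s : Finset ι) (f : ι → Tropical R) :
    ∑ i ∈ s, f i = s.inf f := by
  induction s using Finset.cons_induction with
  | empty => rfl
  | cons i s hi ih => rw [Finset.sum_cons, Finset.inf_cons, ih, min_eq_add]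

theorem eq_and_eq_of_mul_eq_mul [AddCommMonoid R] [LinearOrder R] [IsOrderedCancelAddMonoid R]
    {x y x' y' : Tropical (WithTop R)} (hx : x ≤ x') (hy : y ≤ y') (h : x * y = x' * y')
    (h0 : x * y ≠ 0) : x = x' ∧ y = y' := by
  rw [← untrop_le_iff] at hx hy
  rw [← untrop_inj_iff, untrop_mul, untrop_mul] at h
  rw [Ne, ← untrop_inj_iff, untrop_mul, untrop_zero] at h0
  rw [← untrop_inj_iff, ← untrop_inj_iff]
  obtain ⟨hu, hv⟩ := WithTop.add_ne_top.1 h0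
  obtain ⟨hu', hv'⟩ := WithTop.add_ne_top.1 (h ▸ h0)
  lift untrop x to R using hu with u
  lift untrop y to R using hv with v
  lift untrop x' to R using hu' with u'
  lift untrop y' to R using hv' with v'
  norm_cast at *
  exact (add_eq_add_iff_eq_and_eq hx hy).1 h

end Tropical

section

variable {f g : Polynomial TropR} {a : WithTop ℝ}

theorem eval_trop_eq_inf (f : Polynomial TropR) (a : WithTop ℝ) :
    f.eval (trop a) = (Finset.range (f.natDegree + 1)).inf (trmVal f a) := by
  rw [eval_eq_sum_range, Tropical.sum_eq_inf]
  rfl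

theorem eval_le_trmVal (f : Polynomial TropR) (a : WithTop ℝ) (i : ℕ) :
    f.eval (trop a) ≤ trmVal f a i := by
  by_cases hi : i ≤ f.natDegree
  · rw [eval_trop_eq_inf]
    exact Finset.inf_le (Finset.mem_range_succ_iff.2 hi)
  · simp [trmVal, coeff_eq_zero_of_natDegree_lt (not_le.1 hi)]

theorem trmVal_add (f g : Polynomial TropR) (a : WithTop ℝ) (i : ℕ) :
    trmVal (f + g) a i = trmVal f a i + trmVal g a i := by
  simp only [trmVal, coeff_add, add_mul]

theorem trmVal_mul (f g : Polynomial TropR) (a : WithTop ℝ) (k : ℕ) :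
    trmVal (f * g) a k = ∑ p ∈ antidiagonal k, trmVal f a p.1 * trmVal g a p.2 := by
  rw [trmVal, coeff_mul, Finset.sum_mul]
  refine Finset.sum_congr rfl fun p hp => ?_
  rw [← mem_antidiagonal.1 hp, pow_add, trmVal, trmVal]
  ring

def argminTerms (f : Polynomial TropR) (a : WithTop ℝ) : Set ℕ :=
  {i | trmVal f a i = f.eval (trop a)}

theorem mem_argminTerms {i : ℕ} : i ∈ argminTerms f a ↔ trmVal f a i = f.eval (trop a) :=
  Iff.rfl

theorem argminTerms_nonempty (f : Polynomial TropR) (a : WithTop ℝ) :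
    (argminTerms f a).Nonempty := by
  obtain ⟨i, -, hi⟩ := Finset.exists_mem_eq_inf _ Finset.nonempty_range_add_one (trmVal f a)
  exact ⟨i, by rw [mem_argminTerms, eval_trop_eq_inf, hi]⟩

theorem argminTerms_eq_univ (h : f.eval (trop a) = 0) : argminTerms f a = Set.univ :=
  Set.eq_univ_of_forall fun i => by
    rw [mem_argminTerms, h]
    exact le_antisymm (Tropical.le_zero _) (h ▸ eval_le_trmVal f a i)

theorem mem_tropVa_iff : a ∈ tropVa f ↔ (argminTerms f a).Nontrivial := by
  constructor
  · rintro (h | ⟨i, j, hij, hi, hj⟩)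
    · rw [argminTerms_eq_univ h]
      exact Set.nontrivial_univ
    · exact ⟨i, hi, j, hj, hij⟩
  · rintro ⟨i, hi, j, hj, hij⟩
    exact Or.inr ⟨i, j, hij, hi, hj⟩

theorem eval_ne_zero_of_notMem_tropVa (h : a ∉ tropVa f) : f.eval (trop a) ≠ 0 :=
  fun h0 => h (Or.inl h0)

theorem argminTerms_subset_add (h : f.eval (trop a) ≤ g.eval (trop a)) :
    argminTerms f a ⊆ argminTerms (f + g) a := by
  intro i hi
  rw [mem_argminTerms] at hi ⊢
  have hfg : trmVal f a i ≤ trmVal g a i := hi ▸ h.trans (eval_le_trmVal g a i)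
  rw [trmVal_add, eval_add, Tropical.add_eq_left hfg, Tropical.add_eq_left h, hi]

theorem add_argminTerms_subset (f g : Polynomial TropR) (a : WithTop ℝ) :
    argminTerms f a + argminTerms g a ⊆ argminTerms (f * g) a := by
  rintro _ ⟨i, hi, j, hj, rfl⟩
  rw [mem_argminTerms] at hi hj ⊢
  refine le_antisymm ?_ (eval_le_trmVal _ a _)
  calc trmVal (f * g) a (i + j) ≤ trmVal f a i * trmVal g a j := by
        rw [trmVal_mul, Tropical.sum_eq_inf]
        exact Finset.inf_le (b := (i, j)) (mem_antidiagonal.2 rfl)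
    _ = (f * g).eval (trop a) := by rw [hi, hj, eval_mul]

theorem argminTerms_mul (h : (f * g).eval (trop a) ≠ 0) :
    argminTerms (f * g) a = argminTerms f a + argminTerms g a := by
  refine subset_antisymm (fun k hk => ?_) (add_argminTerms_subset f g a)
  rw [mem_argminTerms] at hk
  obtain ⟨p, hp, hmin⟩ := Finset.exists_mem_eq_inf (antidiagonal k) ⟨(0, k), by simp⟩
    (fun p => trmVal f a p.1 * trmVal g a p.2)
  rw [trmVal_mul, Tropical.sum_eq_inf, hmin, eval_mul] at hk
  rw [eval_mul] at h
  obtain ⟨hf, hg⟩ := Tropical.eq_and_eq_of_mul_eq_mul (eval_le_trmVal f a p.1)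
    (eval_le_trmVal g a p.2) hk.symm h
  exact ⟨p.1, hf.symm, p.2, hg.symm, mem_antidiagonal.1 hp⟩

theorem argminTerms_one (a : WithTop ℝ) : argminTerms 1 a = {0} := by
  ext i
  rcases eq_or_ne i 0 with rfl | hi
  · simp [mem_argminTerms, trmVal]
  · simp [mem_argminTerms, trmVal, coeff_one, hi]

theorem add_mem_tropVa (hf : a ∈ tropVa f) (hg : a ∈ tropVa g) : a ∈ tropVa (f + g) := by
  rw [mem_tropVa_iff] at hf hg ⊢
  rcases le_total (f.eval (trop a)) (g.eval (trop a)) with h | h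
  · exact hf.mono (argminTerms_subset_add h)
  · rw [add_comm]
    exact hg.mono (argminTerms_subset_add h)

theorem mul_mem_tropVa_left (c : Polynomial TropR) (hf : a ∈ tropVa f) : a ∈ tropVa (c * f) := by
  by_cases h : (c * f).eval (trop a) = 0
  · exact Or.inl h
  rw [mem_tropVa_iff] at hf ⊢
  rw [argminTerms_mul h]
  exact hf.add_left (argminTerms_nonempty c a)

theorem mem_or_mem_of_mul_mem_tropVa (h : a ∈ tropVa (f * g)) : a ∈ tropVa f ∨ a ∈ tropVa g := by
  by_contra! ⟨hf, hg⟩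
  have h0 : (f * g).eval (trop a) ≠ 0 := by
    rw [eval_mul]
    exact mul_ne_zero (eval_ne_zero_of_notMem_tropVa hf) (eval_ne_zero_of_notMem_tropVa hg)
  rw [mem_tropVa_iff, Set.not_nontrivial_iff] at hf hg
  rw [mem_tropVa_iff, argminTerms_mul h0, ← Set.image2_add] at h
  exact Set.not_nontrivial_iff.2 (hf.image2 hg _) h

theorem one_notMem_tropVa (a : WithTop ℝ) : a ∉ tropVa 1 := by
  rw [mem_tropVa_iff, argminTerms_one]
  exact Set.not_nontrivial_singleton

end

/-- The ideal `J_a`. -/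
def tropVanishingIdeal (a : WithTop ℝ) : Ideal (Polynomial TropR) where
  carrier := {f | a ∈ tropVa f}
  add_mem' := add_mem_tropVa
  zero_mem' := Or.inl eval_zero
  smul_mem' c _ := mul_mem_tropVa_left c

theorem mem_tropVanishingIdeal {a : WithTop ℝ} {f : Polynomial TropR} :
    f ∈ tropVanishingIdeal a ↔ a ∈ tropVa f :=
  Iff.rfl

theorem tropVanishingIdeal_isPrime (a : WithTop ℝ) : (tropVanishingIdeal a).IsPrime := by
  refine Ideal.isPrime_iff.2 ⟨?_, fun {f g} => ?_⟩
  · rw [Ne, Ideal.eq_top_iff_one, mem_tropVanishingIdeal]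
    exact one_notMem_tropVa a
  · simp only [mem_tropVanishingIdeal]
    exact mem_or_mem_of_mul_mem_tropVa

/-- For every `a ∈ ℝ ∪ {∞}`, the set `J_a` of univariate tropical polynomials `f` with
`a ∈ V(f)` is a prime ideal of the semiring `R̄[x]`. -/
theorem Ja_is_prime_ideal (a : WithTop ℝ) :
    ∃ P : Ideal (Polynomial TropR), (∀ f, f ∈ P ↔ a ∈ tropVa f) ∧ P.IsPrime :=
  ⟨tropVanishingIdeal a, fun _ => mem_tropVanishingIdeal, tropVanishingIdeal_isPrime a⟩
end

section
/- Let f ∈ R̄[x] be a tropical polynomial with leading coefficient b_d ≠ ∞, and let g = b_d ⊙ ∏_{i=1}^s (x ⊕ a_i)^{m_i} be the tropical polynomial with the same tropical roots a_i with multiplicities m_i (the least-coefficient functional representative of f). Then g ⊙ f = g ⊙ g as tropical polynomials. -/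
open Polynomial

/-- Classical scaling of an element of `ℝ ∪ {∞}` by a real number (with `r·∞ = ∞`). -/
noncomputable def scl (r : ℝ) : WithTop ℝ → WithTop ℝ := WithTop.map fun t => r * t

/-- The coefficients `c_j` of the least-coefficient functional representative `g` of a
tropical polynomial with coefficients `b₀,…,b_d`:
`c_j = min({b_j} ∪ {(b_i(k−j) + b_k(j−i))/(k−i) : 0 ≤ i < j < k ≤ d})`. -/
noncomputable def leastCoeff (b : ℕ → WithTop ℝ) (d j : ℕ) : WithTop ℝ :=
  min (b j)
    ((Finset.range (d + 1) ×ˢ Finset.range (d + 1)).inf fun ik =>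
      if ik.1 < j ∧ j < ik.2 then
        scl ((ik.2 : ℝ) - (ik.1 : ℝ))⁻¹
          (scl ((ik.2 : ℝ) - (j : ℝ)) (b ik.1) + scl ((j : ℝ) - (ik.1 : ℝ)) (b ik.2))
      else ⊤)

open Finset Tropical

/-!
Write `c` and `b` for the coefficient sequences of `g` and `f`, padded with `∞` above degree
`d`. The `n`-th coefficient of `g ⊙ g` is the minimum `D` of `c x + c y` over `x + y = n`; take a
minimising pair with `x` least. If `c x = b x` or `c y = b y`, the value `D` also occurs in
`g ⊙ f`, and `c ≤ b` gives the reverse inequality. Otherwise `c x < b x` and `c y < b y`, so `c x`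
and `c y` lie on chords of `b` and hence `c (x - 1) + c (x + 1) ≤ 2 c x`, likewise at `y`. Adding
these, the pairs `(x - 1, y + 1)` and `(x + 1, y - 1)` have total at most `2 D`, while by the
choice of `x` the first exceeds `D` and the second is at least `D`: a contradiction.
-/

theorem exists_eq_of_min_inf_lt {ι α : Type*} [LinearOrder α] [OrderTop α] {s : Finset ι}
    {f : ι → α} {a : α} (h : min a (s.inf f) < a) : ∃ i ∈ s, f i < a ∧ min a (s.inf f) = f i := by
  rw [min_lt_iff, lt_self_iff_false, false_or] at h
  obtain ⟨i, hi, hfi⟩ := exists_mem_eq_inf s (nonempty_of_ne_empty (by rintro rfl; simp at h)) f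
  exact ⟨i, hi, hfi ▸ h, by rw [min_eq_right h.le, hfi]⟩

section Convolution

variable {α : Type*} [AddCommMonoid α] [LinearOrder α] [IsOrderedCancelAddMonoid α]

theorem inf_antidiagonal_add_eq_of_le_of_midpoint {c b : ℕ → WithTop α} (hcb : c ≤ b)
    (hmid : ∀ j, c j < b j → 0 < j ∧ c (j - 1) + c (j + 1) ≤ c j + c j) (n : ℕ) :
    (antidiagonal n).inf (fun p => c p.1 + b p.2) =
      (antidiagonal n).inf (fun p => c p.1 + c p.2) := by
  refine le_antisymm ?_ (inf_mono_fun fun p _ => add_le_add_right (hcb p.2) _)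
  set D := (antidiagonal n).inf (fun p => c p.1 + c p.2)
  rcases eq_or_ne D ⊤ with hD | hD
  · exact hD ▸ le_top
  obtain ⟨⟨x, y⟩, hmem, hleast⟩ :=
    exists_min_image ((antidiagonal n).filter fun p => c p.1 + c p.2 = D) Prod.fst <| by
      obtain ⟨p, hp, hpD⟩ := exists_mem_eq_inf (antidiagonal n) ⟨(0, n), by simp⟩
        fun p => c p.1 + c p.2
      exact ⟨p, mem_filter.2 ⟨hp, hpD.symm⟩⟩
  obtain ⟨hxy, hxyD⟩ := mem_filter.1 hmem
  rw [HasAntidiagonal.mem_antidiagonal] at hxy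
  have mem : ∀ i j, i + j = n → (i, j) ∈ antidiagonal n :=
    fun i j h => HasAntidiagonal.mem_antidiagonal.2 h
  by_cases hx : c x = b x
  · calc _ ≤ c y + b x := inf_le (f := fun p => c p.1 + b p.2) (mem y x (by omega))
      _ = D := by rw [← hx, add_comm, hxyD]
  by_cases hy : c y = b y
  · calc _ ≤ c x + b y := inf_le (f := fun p => c p.1 + b p.2) (mem x y hxy)
      _ = D := by rw [← hy, hxyD]
  obtain ⟨hx0, hxmid⟩ := hmid x ((hcb x).lt_of_ne hx)
  obtain ⟨hy0, hymid⟩ := hmid y ((hcb y).lt_of_ne hy)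
  have hleft : D < c (x - 1) + c (y + 1) := by
    refine (inf_le (mem (x - 1) (y + 1) (by omega))).lt_of_ne fun h => ?_
    have := hleast (x - 1, y + 1) (mem_filter.2 ⟨mem _ _ (by omega), h.symm⟩)
    dsimp only at this
    omega
  have hright : D ≤ c (x + 1) + c (y - 1) := inf_le (mem _ _ (by omega))
  refine absurd ?_ (lt_irrefl (D + D))
  calc D + D < (c (x - 1) + c (y + 1)) + (c (x + 1) + c (y - 1)) :=
        WithTop.add_lt_add_of_lt_of_le hD hleft hright
    _ = (c (x - 1) + c (x + 1)) + (c (y - 1) + c (y + 1)) := by ac_rfl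
    _ ≤ (c x + c x) + (c y + c y) := add_le_add hxmid hymid
    _ = D + D := by rw [← hxyD]; ac_rfl

end Convolution

theorem coeff_sum_range_C_mul_X_pow {R : Type*} [Semiring R] (a : ℕ → R) (d i : ℕ) :
    (∑ j ∈ range (d + 1), C (a j) * X ^ j).coeff i = if i ≤ d then a i else 0 := by
  simp [finsetSum_coeff]

def padTop {α : Type*} [Top α] (d : ℕ) (a : ℕ → α) (i : ℕ) : α := if i ≤ d then a i else ⊤

theorem untrop_coeff_sum_range {α : Type*} [LinearOrderedAddCommMonoidWithTop α]
    (a : ℕ → α) (d i : ℕ) :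
    untrop ((∑ j ∈ range (d + 1), C (trop (a j)) * X ^ j).coeff i) =
      padTop d a i := by
  rw [coeff_sum_range_C_mul_X_pow, padTop, apply_ite untrop, untrop_trop, untrop_zero]

theorem untrop_coeff_mul {R : Type*} [LinearOrderedAddCommMonoidWithTop R]
    (p q : (Tropical R)[X]) (n : ℕ) :
    untrop ((p * q).coeff n) =
      (antidiagonal n).inf fun x => untrop (p.coeff x.1) + untrop (q.coeff x.2) := by
  rw [coeff_mul, Finset.untrop_sum']
  rfl

theorem scl_top (r : ℝ) : scl r ⊤ = ⊤ := rfl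

noncomputable def chord (p k : ℕ) (β γ t : ℝ) : ℝ :=
  ((k : ℝ) - p)⁻¹ * ((k - t) * β + (t - p) * γ)

theorem scl_chord (p k : ℕ) (β γ t : ℝ) :
    scl ((k : ℝ) - p)⁻¹ (scl ((k : ℝ) - t) β + scl (t - p) γ) = chord p k β γ t := rfl

theorem chord_left {p k : ℕ} (h : p ≠ k) (β γ : ℝ) : chord p k β γ p = β := by
  have : (k : ℝ) - p ≠ 0 := sub_ne_zero.2 (Nat.cast_injective.ne h.symm)
  rw [chord, sub_self, zero_mul, add_zero, inv_mul_cancel_left₀ this]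

theorem chord_right {p k : ℕ} (h : p ≠ k) (β γ : ℝ) : chord p k β γ k = γ := by
  have : (k : ℝ) - p ≠ 0 := sub_ne_zero.2 (Nat.cast_injective.ne h.symm)
  rw [chord, sub_self, zero_mul, zero_add, inv_mul_cancel_left₀ this]

theorem chord_sub_one_add_chord_add_one (p k : ℕ) (β γ t : ℝ) :
    chord p k β γ (t - 1) + chord p k β γ (t + 1) = chord p k β γ t + chord p k β γ t := by
  unfold chord
  ring

theorem leastCoeff_le (b : ℕ → WithTop ℝ) (d j : ℕ) : leastCoeff b d j ≤ b j :=
  min_le_left _ _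

theorem leastCoeff_le_chord {b : ℕ → WithTop ℝ} {d p k t : ℕ} {β γ : ℝ} (hp : b p = β)
    (hk : b k = γ) (hpt : p ≤ t) (htk : t ≤ k) (hpk : p < k) (hkd : k ≤ d) :
    leastCoeff b d t ≤ chord p k β γ t := by
  rcases hpt.eq_or_lt with rfl | hpt
  · rw [chord_left hpk.ne, ← hp]
    exact leastCoeff_le b d _
  rcases htk.eq_or_lt with rfl | htk
  · rw [chord_right hpk.ne, ← hk]
    exact leastCoeff_le b d _
  refine (min_le_right _ _).trans ((inf_le (b := (p, k)) (by simp; omega)).trans_eq ?_)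
  rw [if_pos ⟨hpt, htk⟩, hp, hk, scl_chord]

theorem exists_chord_of_leastCoeff_lt {b : ℕ → WithTop ℝ} {d j : ℕ}
    (h : leastCoeff b d j < b j) :
    ∃ p k : ℕ, ∃ β γ : ℝ, p < j ∧ j < k ∧ k ≤ d ∧ b p = β ∧ b k = γ ∧
      leastCoeff b d j = chord p k β γ j := by
  obtain ⟨⟨p, k⟩, hmem, hlt, heq⟩ := exists_eq_of_min_inf_lt h
  simp only [mem_product, mem_range] at hmem
  by_cases hpk : p < j ∧ j < k
  swap
  · rw [if_neg hpk] at hlt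
    exact absurd hlt not_top_lt
  rw [if_pos hpk] at hlt heq
  obtain ⟨β, hβ⟩ := WithTop.ne_top_iff_exists.1 (show b p ≠ ⊤ by
    intro hp; simp [hp, scl_top] at hlt)
  obtain ⟨γ, hγ⟩ := WithTop.ne_top_iff_exists.1 (show b k ≠ ⊤ by
    intro hk; simp [hk, scl_top] at hlt)
  refine ⟨p, k, β, γ, hpk.1, hpk.2, by omega, hβ.symm, hγ.symm, heq.trans ?_⟩
  rw [← hβ, ← hγ, scl_chord]

theorem leastCoeff_midpoint_of_lt {b : ℕ → WithTop ℝ} {d j : ℕ} (h : leastCoeff b d j < b j) :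
    0 < j ∧ j < d ∧
      leastCoeff b d (j - 1) + leastCoeff b d (j + 1) ≤ leastCoeff b d j + leastCoeff b d j := by
  obtain ⟨p, k, β, γ, hpj, hjk, hkd, hp, hk, hj⟩ := exists_chord_of_leastCoeff_lt h
  refine ⟨by omega, by omega, ?_⟩
  have hprev := leastCoeff_le_chord (t := j - 1) hp hk (by omega) (by omega) (by omega) hkd
  have hnext := leastCoeff_le_chord (t := j + 1) hp hk (by omega) (by omega) (by omega) hkd
  rw [Nat.cast_pred (by omega)] at hprev
  push_cast at hnext
  calc _ ≤ (chord p k β γ (j - 1) : WithTop ℝ) + chord p k β γ (j + 1) := add_le_add hprev hnext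
    _ = leastCoeff b d j + leastCoeff b d j := by
      rw [hj, ← WithTop.coe_add, ← WithTop.coe_add, chord_sub_one_add_chord_add_one]

theorem padTop_leastCoeff_le (b : ℕ → WithTop ℝ) (d : ℕ) :
    padTop d (leastCoeff b d) ≤ padTop d b := fun i => by
  unfold padTop
  split_ifs
  exacts [leastCoeff_le b d i, le_rfl]

theorem padTop_leastCoeff_midpoint_of_lt (b : ℕ → WithTop ℝ) (d j : ℕ)
    (h : padTop d (leastCoeff b d) j < padTop d b j) :
    0 < j ∧ padTop d (leastCoeff b d) (j - 1) + padTop d (leastCoeff b d) (j + 1) ≤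
      padTop d (leastCoeff b d) j + padTop d (leastCoeff b d) j := by
  by_cases hj : j ≤ d
  swap
  · simp [padTop, hj] at h
  rw [padTop, padTop, if_pos hj, if_pos hj] at h
  obtain ⟨hj0, hjd, hmid⟩ := leastCoeff_midpoint_of_lt h
  refine ⟨hj0, ?_⟩
  simpa only [padTop, if_pos hj, if_pos (show j - 1 ≤ d by omega),
    if_pos (show j + 1 ≤ d by omega)] using hmid

theorem mul_leastRepresentative_eq_sq_general (d : ℕ) (b : ℕ → WithTop ℝ) :
    (∑ j ∈ Finset.range (d + 1), C (Tropical.trop (leastCoeff b d j)) * X ^ j) *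
        (∑ i ∈ Finset.range (d + 1), C (Tropical.trop (b i)) * X ^ i) =
      (∑ j ∈ Finset.range (d + 1), C (Tropical.trop (leastCoeff b d j)) * X ^ j) *
        (∑ j ∈ Finset.range (d + 1), C (Tropical.trop (leastCoeff b d j)) * X ^ j) := by
  ext n
  apply untrop_injective
  simp only [untrop_coeff_mul, untrop_coeff_sum_range]
  exact inf_antidiagonal_add_eq_of_le_of_midpoint (padTop_leastCoeff_le b d)
    (padTop_leastCoeff_midpoint_of_lt b d) n

/-- Let `f = ⊕_{i≤d} b_i ⊙ xⁱ` be a tropical polynomial with leading coefficient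
`b_d ≠ ∞` and let `g = ⊕_{j≤d} c_j ⊙ xʲ` be its least-coefficient functional
representative (equivalently `g = b_d ⊙ ∏ (x ⊕ a_i)^{m_i}` over the tropical roots
`a_i` of `f` with multiplicities `m_i`).  Then `g ⊙ f = g ⊙ g` as tropical
polynomials. -/
theorem mul_leastRepresentative_eq_sq (d : ℕ) (b : ℕ → WithTop ℝ) (hb : b d ≠ ⊤) :
    (∑ j ∈ Finset.range (d + 1), C (Tropical.trop (leastCoeff b d j)) * X ^ j) *
        (∑ i ∈ Finset.range (d + 1), C (Tropical.trop (b i)) * X ^ i) =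
      (∑ j ∈ Finset.range (d + 1), C (Tropical.trop (leastCoeff b d j)) * X ^ j) *
        (∑ j ∈ Finset.range (d + 1), C (Tropical.trop (leastCoeff b d j)) * X ^ j) :=
  mul_leastRepresentative_eq_sq_general d b
end

section
/- For n ≥ 2 and d ≥ 0, the function p_d on (d+1)-subsets B of the degree-d monomials in x₀,…,xₙ defined by p_d(B) = 0 if for every k ≤ d and every degree-k monomial x^v the number of elements of B divisible by x^v is at most d − k + 1, and p_d(B) = ∞ otherwise, has support equal to the set of bases of a matroid of rank d + 1 on the degree-d monomials. -/
/-- The set `mon_d` of monomials of degree `d` in the `n + 1` variables `x₀,…,xₙ`,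
encoded as exponent vectors. -/
def Mon (n d : ℕ) : Type := {u : Fin (n + 1) → ℕ // ∑ i, u i = d}

instance (n d : ℕ) : DecidableEq (Mon n d) := Subtype.instDecidableEq

/-- `B` lies in the support of `p_d`: it is a `(d+1)`-subset of `mon_d` such that for
every `k ≤ d` and every monomial `x^v` of degree `k`, at most `d − k + 1` elements of
`B` are divisible by `x^v`. -/
def IsPdBasis (n d : ℕ) (B : Finset (Mon n d)) : Prop :=
  B.card = d + 1 ∧
  ∀ k : ℕ, k ≤ d → ∀ v : Fin (n + 1) → ℕ, (∑ i, v i) = k →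
    (B.filter fun u => ∀ i, v i ≤ u.1 i).card ≤ d - k + 1

namespace PdAux

variable {n d : ℕ}

/-- number of elements of `C` divisible by `x^v` -/
def cnt (C : Finset (Mon n d)) (v : Fin (n + 1) → ℕ) : ℕ :=
  (C.filter fun u => ∀ i, v i ≤ u.1 i).card

/-- `C` satisfies all the divisibility constraints. -/
def Sat (C : Finset (Mon n d)) : Prop :=
  ∀ v : Fin (n + 1) → ℕ, (∑ i, v i) ≤ d → cnt C v ≤ d + 1 - ∑ i, v i

def Tight (C : Finset (Mon n d)) (v : Fin (n + 1) → ℕ) : Prop :=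
  (∑ i, v i) ≤ d ∧ d + 1 - (∑ i, v i) ≤ cnt C v

def MinTight (C : Finset (Mon n d)) (v : Fin (n + 1) → ℕ) : Prop :=
  Tight C v ∧ ∀ w, Tight C w → (∀ i, w i ≤ v i) → w = v

lemma sat_of_isPdBasis {B : Finset (Mon n d)} (h : IsPdBasis n d B) : Sat B := by
  intro v hv
  have h2 := h.2 (∑ i, v i) hv v rfl
  unfold cnt
  omega

lemma sat_mono {C C' : Finset (Mon n d)} (hsub : C' ⊆ C) (h : Sat C) : Sat C' := by
  intro v hv
  exact le_trans (Finset.card_le_card (Finset.filter_subset_filter _ hsub)) (h v hv)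

lemma exists_min_tight (C : Finset (Mon n d)) :
    ∀ N (v : Fin (n + 1) → ℕ), (∑ i, v i) ≤ N → Tight C v →
    ∃ w, (∀ i, w i ≤ v i) ∧ MinTight C w := by
  intro N
  induction N with
  | zero =>
    intro v hv ht
    refine ⟨v, fun i => le_rfl, ht, fun w hw hle => funext fun i => ?_⟩
    have h0 : v i = 0 :=
      Finset.sum_eq_zero_iff.mp (Nat.le_zero.mp hv) i (Finset.mem_univ i)
    have := hle i
    omega
  | succ N ih =>
    intro v hv ht
    by_cases h : ∀ w, Tight C w → (∀ i, w i ≤ v i) → w = v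
    · exact ⟨v, fun i => le_rfl, ht, h⟩
    · push_neg at h
      obtain ⟨w', hw't, hw'le, hne⟩ := h
      have hex : ∃ i, w' i < v i := by
        by_contra hc
        push_neg at hc
        exact hne (funext fun i => le_antisymm (hw'le i) (hc i))
      obtain ⟨j, hj⟩ := hex
      have hlt : (∑ i, w' i) < ∑ i, v i :=
        Finset.sum_lt_sum (fun i _ => hw'le i) ⟨j, Finset.mem_univ j, hj⟩
      obtain ⟨w, hw1, hw2⟩ := ih w' (by omega) hw't
      exact ⟨w, fun i => le_trans (hw1 i) (hw'le i), hw2⟩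

lemma tight_min {C : Finset (Mon n d)} (hC : Sat C) {v w : Fin (n + 1) → ℕ}
    (hv : Tight C v) (hw : Tight C w) (u : Mon n d)
    (huv : ∀ i, v i ≤ u.1 i) (huw : ∀ i, w i ≤ u.1 i) :
    Tight C (fun i => min (v i) (w i)) := by
  classical
  set m : Fin (n + 1) → ℕ := fun i => min (v i) (w i) with hm
  set M : Fin (n + 1) → ℕ := fun i => max (v i) (w i) with hM
  have hMd : (∑ i, M i) ≤ d := by
    calc (∑ i, M i) ≤ ∑ i, u.1 i :=
          Finset.sum_le_sum (fun i _ => max_le (huv i) (huw i))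
      _ = d := u.2
  have hmd : (∑ i, m i) ≤ d :=
    le_trans (Finset.sum_le_sum fun i _ => min_le_left _ _) hv.1
  have hsum : (∑ i, m i) + (∑ i, M i) = (∑ i, v i) + (∑ i, w i) := by
    rw [← Finset.sum_add_distrib, ← Finset.sum_add_distrib]
    refine Finset.sum_congr rfl fun i _ => ?_
    simp only [hm, hM]
    omega
  have hinter : (C.filter fun u => ∀ i, v i ≤ u.1 i) ∩ (C.filter fun u => ∀ i, w i ≤ u.1 i)
      = C.filter fun u => ∀ i, M i ≤ u.1 i := by
    ext x
    simp only [Finset.mem_inter, Finset.mem_filter, hM, max_le_iff]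
    constructor
    · rintro ⟨⟨hx, h1⟩, ⟨_, h2⟩⟩
      exact ⟨hx, fun i => ⟨h1 i, h2 i⟩⟩
    · rintro ⟨hx, h⟩
      exact ⟨⟨hx, fun i => (h i).1⟩, ⟨hx, fun i => (h i).2⟩⟩
  have hunion : (C.filter fun u => ∀ i, v i ≤ u.1 i) ∪ (C.filter fun u => ∀ i, w i ≤ u.1 i)
      ⊆ C.filter fun u => ∀ i, m i ≤ u.1 i := by
    intro x hx
    rcases Finset.mem_union.mp hx with hx | hx <;>
      · rw [Finset.mem_filter] at hx ⊢
        refine ⟨hx.1, fun i => le_trans ?_ (hx.2 i)⟩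
        simp [hm]
  have hcards := Finset.card_inter_add_card_union
    (C.filter fun u => ∀ i, v i ≤ u.1 i) (C.filter fun u => ∀ i, w i ≤ u.1 i)
  rw [hinter] at hcards
  have hU := Finset.card_le_card hunion
  have h1 := hC M hMd
  have h2 := hC m hmd
  have hv2 := hv.2
  have hw2 := hw.2
  have hv1 := hv.1
  have hw1 := hw.1
  refine ⟨hmd, ?_⟩
  unfold cnt at *
  omega

lemma min_tight_disjoint {C : Finset (Mon n d)} (hC : Sat C) {v w : Fin (n + 1) → ℕ}
    (hv : MinTight C v) (hw : MinTight C w) (hne : v ≠ w) (u : Mon n d) :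
    ¬ ((∀ i, v i ≤ u.1 i) ∧ (∀ i, w i ≤ u.1 i)) := by
  rintro ⟨h1, h2⟩
  have hm := tight_min hC hv.1 hw.1 u h1 h2
  have e1 := hv.2 _ hm (fun i => min_le_left _ _)
  have e2 := hw.2 _ hm (fun i => min_le_right _ _)
  exact hne (e1.symm.trans e2)



lemma zero_ne_one' {n : ℕ} (hn : 2 ≤ n) : (0 : Fin (n + 1)) ≠ 1 := by
  intro h
  have h2 := congrArg Fin.val h
  rw [Fin.val_zero, Fin.val_one'] at h2
  rw [Nat.mod_eq_of_lt (by omega)] at h2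
  omega

lemma sum_two {n : ℕ} (hn : 2 ≤ n) (a b : ℕ) :
    (∑ i : Fin (n + 1), if i = 0 then a else if i = 1 then b else 0) = a + b := by
  have h01 := zero_ne_one' hn
  have key : ∀ i : Fin (n + 1), (if i = 0 then a else if i = 1 then b else 0)
      = (if i = 0 then a else 0) + (if i = 1 then b else 0) := by
    intro i
    by_cases h0 : i = 0
    · subst h0
      rw [if_pos rfl, if_pos rfl, if_neg h01]
      omega
    · by_cases h1 : i = 1
      · subst h1
        simp only [if_neg h0]
        try simp
      · simp only [if_neg h0, if_neg h1]
        try simp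
  rw [Finset.sum_congr rfl fun i _ => key i, Finset.sum_add_distrib,
    Finset.sum_ite_eq' Finset.univ (0 : Fin (n + 1)) (fun _ => a),
    Finset.sum_ite_eq' Finset.univ (1 : Fin (n + 1)) (fun _ => b)]
  simp

/-- the monomial `x₀^(d-j) x₁^j` -/
def edgeMon (n d : ℕ) (hn : 2 ≤ n) (j : ℕ) : Mon n d :=
  ⟨fun i => if i = 0 then d - min j d else if i = 1 then min j d else 0, by
    rw [sum_two hn]; omega⟩

lemma edge_basis (n d : ℕ) (hn : 2 ≤ n) :
    IsPdBasis n d ((Finset.range (d + 1)).image (edgeMon n d hn)) := by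
  classical
  have h01 := zero_ne_one' hn
  have h10 : (1 : Fin (n + 1)) ≠ 0 := h01.symm
  have heval1 : ∀ j, (edgeMon n d hn j).1 1 = min j d := by
    intro j
    simp [edgeMon, h10]
  have heval0 : ∀ j, (edgeMon n d hn j).1 0 = d - min j d := by
    intro j
    simp [edgeMon]
  constructor
  · rw [Finset.card_image_of_injOn, Finset.card_range]
    intro j1 hj1 j2 hj2 he
    rw [Finset.mem_coe, Finset.mem_range] at hj1 hj2
    have := congrArg (fun u : Mon n d => u.1 1) he
    simp only [heval1] at this
    omega
  · intro k hk v hv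
    rw [Finset.filter_image]
    by_cases hsupp : ∀ i, i ≠ 0 → i ≠ 1 → v i = 0
    · have hk2 : v 0 + v 1 = k := by
        rw [← hv]
        have key : ∀ i : Fin (n + 1), v i = if i = 0 then v 0 else if i = 1 then v 1 else 0 := by
          intro i
          by_cases h0 : i = 0
          · simp [h0]
          · by_cases h1 : i = 1
            · subst h1
              rw [if_neg h0, if_pos rfl]
            · rw [if_neg h0, if_neg h1]
              exact hsupp i h0 h1
        rw [Finset.sum_congr rfl fun i _ => key i, sum_two hn]
      calc (((Finset.range (d + 1)).filter
              fun j => ∀ i, v i ≤ (edgeMon n d hn j).1 i).image (edgeMon n d hn)).card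
          ≤ ((Finset.range (d + 1)).filter fun j => ∀ i, v i ≤ (edgeMon n d hn j).1 i).card :=
            Finset.card_image_le
        _ ≤ (Finset.Icc (v 1) (d - v 0)).card := by
            apply Finset.card_le_card
            intro j hj
            rw [Finset.mem_filter, Finset.mem_range] at hj
            obtain ⟨hjd, hdom⟩ := hj
            have e1 := hdom 1
            rw [heval1] at e1
            have e0 := hdom 0
            rw [heval0] at e0
            rw [Finset.mem_Icc]
            omega
        _ = d - v 0 + 1 - v 1 := Nat.card_Icc _ _
        _ ≤ d - k + 1 := by omega
    · push_neg at hsupp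
      obtain ⟨i, hi0, hi1, hvi⟩ := hsupp
      have : ((Finset.range (d + 1)).filter fun j => ∀ i, v i ≤ (edgeMon n d hn j).1 i) = ∅ := by
        rw [Finset.filter_eq_empty_iff]
        intro j _ hdom
        have := hdom i
        simp [edgeMon, hi0, hi1] at this
        omega
      rw [this]
      simp


end PdAux


/-- **The support of `p_d` is the set of bases of a matroid of rank `d + 1`.**  For
`n ≥ 2` and `d ≥ 0`, the collection of `(d+1)`-subsets `B` of the degree-`d` monomials
such that for every `k ≤ d` and every degree-`k` monomial `x^v` at most `d − k + 1`
elements of `B` are divisible by `x^v`, is nonempty and satisfies the basis exchange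
axiom. -/
theorem pd_support_is_matroid (n d : ℕ) (hn : 2 ≤ n) :
    (∃ B : Finset (Mon n d), IsPdBasis n d B) ∧
    ∀ A B : Finset (Mon n d), IsPdBasis n d A → IsPdBasis n d B → ∀ a ∈ A \ B,
      ∃ b ∈ B \ A, IsPdBasis n d (insert b (A.erase a)) := by
  classical
  constructor
  · exact ⟨_, PdAux.edge_basis n d hn⟩
  · intro A B hA hB a ha
    rw [Finset.mem_sdiff] at ha
    set A' := A.erase a with hA'def
    have hsatA' : PdAux.Sat A' :=
      PdAux.sat_mono (Finset.erase_subset _ _) (PdAux.sat_of_isPdBasis hA)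
    have hsatB : PdAux.Sat B := PdAux.sat_of_isPdBasis hB
    have hcardA' : A'.card = d := by
      rw [hA'def, Finset.card_erase_of_mem ha.1, hA.1]
      omega
    by_cases hgood : ∃ b ∈ B \ A, ∀ v, PdAux.Tight A' v → ¬ (∀ i, v i ≤ b.1 i)
    · obtain ⟨b, hb, hbv⟩ := hgood
      rw [Finset.mem_sdiff] at hb
      refine ⟨b, Finset.mem_sdiff.mpr hb, ?_, ?_⟩
      · rw [Finset.card_insert_of_notMem
          (fun hbA' => hb.2 (Finset.erase_subset _ _ hbA')), hcardA']
      · intro k hk v hv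
        have hvd : (∑ i, v i) ≤ d := le_of_eq_of_le hv hk
        have h1 := hsatA' v hvd
        unfold PdAux.cnt at h1
        rw [hv] at h1
        rw [Finset.filter_insert]
        by_cases hvb : ∀ i, v i ≤ b.1 i
        · rw [if_pos hvb]
          have hnt : ¬ (d + 1 - k ≤ (A'.filter fun u => ∀ i, v i ≤ u.1 i).card) := by
            intro hle
            refine hbv v ⟨hvd, ?_⟩ hvb
            unfold PdAux.cnt
            rw [hv]
            exact hle
          have h2 := Finset.card_insert_le b (A'.filter fun u => ∀ i, v i ≤ u.1 i)
          omega
        · rw [if_neg hvb]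
          omega
    · push_neg at hgood
      exfalso
      set Bad : Mon n d → Prop :=
        fun u => ∃ v, PdAux.Tight A' v ∧ ∀ i, v i ≤ u.1 i with hBadDef
      have key : ∀ u : Mon n d, Bad u →
          ∃ w, PdAux.MinTight A' w ∧ ∀ i, w i ≤ u.1 i := by
        intro u hu
        obtain ⟨v, hvt, hvle⟩ := hu
        obtain ⟨w, hw1, hw2⟩ := PdAux.exists_min_tight A' (∑ i, v i) v le_rfl hvt
        exact ⟨w, hw2, fun i => le_trans (hw1 i) (hvle i)⟩
      set f : Mon n d → (Fin (n + 1) → ℕ) :=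
        fun u => if h : Bad u then (key u h).choose else (fun _ => 0) with hfdef
      have hf : ∀ u, (h : Bad u) →
          PdAux.MinTight A' (f u) ∧ ∀ i, f u i ≤ u.1 i := by
        intro u h
        simp only [hfdef, dif_pos h]
        exact (key u h).choose_spec
      set V : Finset (Fin (n + 1) → ℕ) := (B.filter Bad).image f with hVdef
      have hVmin : ∀ v ∈ V, PdAux.MinTight A' v := by
        intro v hv
        obtain ⟨b, hb, rfl⟩ := Finset.mem_image.mp hv
        exact (hf b (Finset.mem_filter.mp hb).2).1
      have hsub1 : B.filter Bad ⊆
          V.biUnion (fun v => B.filter fun u => ∀ i, v i ≤ u.1 i) := by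
        intro b hb
        have hbB := (Finset.mem_filter.mp hb).1
        have hbBad := (Finset.mem_filter.mp hb).2
        refine Finset.mem_biUnion.mpr ⟨f b, Finset.mem_image_of_mem f hb, ?_⟩
        exact Finset.mem_filter.mpr ⟨hbB, (hf b hbBad).2⟩
      have c2 : ∀ v ∈ V, (B.filter fun u => ∀ i, v i ≤ u.1 i).card
          ≤ (A'.filter fun u => ∀ i, v i ≤ u.1 i).card := by
        intro v hv
        have hmt := hVmin v hv
        have ht := hmt.1
        have h1 := hsatB v ht.1
        have h2 := ht.2
        unfold PdAux.cnt at h1 h2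
        omega
      have c3 : ∀ x ∈ V, ∀ y ∈ V, x ≠ y →
          Disjoint (A'.filter fun u => ∀ i, x i ≤ u.1 i)
            (A'.filter fun u => ∀ i, y i ≤ u.1 i) := by
        intro x hx y hy hxy
        rw [Finset.disjoint_left]
        intro u hux huy
        exact PdAux.min_tight_disjoint hsatA' (hVmin x hx) (hVmin y hy) hxy u
          ⟨(Finset.mem_filter.mp hux).2, (Finset.mem_filter.mp huy).2⟩
      have c4 : V.biUnion (fun v => A'.filter fun u => ∀ i, v i ≤ u.1 i)
          ⊆ A'.filter Bad := by
        intro u hu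
        obtain ⟨v, hvV, huv⟩ := Finset.mem_biUnion.mp hu
        rw [Finset.mem_filter] at huv ⊢
        exact ⟨huv.1, ⟨v, (hVmin v hvV).1, huv.2⟩⟩
      have c5 : B.filter (fun u => ¬ Bad u) ⊆ A'.filter (fun u => ¬ Bad u) := by
        intro b hb
        rw [Finset.mem_filter] at hb ⊢
        refine ⟨?_, hb.2⟩
        have hbA : b ∈ A := by
          by_contra hbA
          exact hb.2 (hgood b (Finset.mem_sdiff.mpr ⟨hb.1, hbA⟩))
        have hba : b ≠ a := fun h => ha.2 (h ▸ hb.1)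
        exact Finset.mem_erase.mpr ⟨hba, hbA⟩
      have hx1 : (B.filter Bad).card ≤ (A'.filter Bad).card := by
        calc (B.filter Bad).card
            ≤ (V.biUnion (fun v => B.filter fun u => ∀ i, v i ≤ u.1 i)).card :=
              Finset.card_le_card hsub1
          _ ≤ ∑ v ∈ V, (B.filter fun u => ∀ i, v i ≤ u.1 i).card :=
              Finset.card_biUnion_le
          _ ≤ ∑ v ∈ V, (A'.filter fun u => ∀ i, v i ≤ u.1 i).card :=
              Finset.sum_le_sum c2
          _ = (V.biUnion (fun v => A'.filter fun u => ∀ i, v i ≤ u.1 i)).card :=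
              (Finset.card_biUnion c3).symm
          _ ≤ (A'.filter Bad).card := Finset.card_le_card c4
      have hx2 : (B.filter fun u => ¬ Bad u).card ≤ (A'.filter fun u => ¬ Bad u).card :=
        Finset.card_le_card c5
      have e1 := Finset.card_filter_add_card_filter_not (s := B) Bad
      have e2 := Finset.card_filter_add_card_filter_not (s := A') Bad
      have hBcard := hB.1
      omega
end
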